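/- arXiv:2205.11787 — 11 statements merged into one kernel-verified Lean document; each statement's English description precedes it below -/
import Mathlib

section
/- For every t ≥ 0 the gradient-descent iterates of the NQM on a single training example satisfy the exact dynamics equations: g(t+1) − y = (1 − η·λ(t) + (‖x‖²/(m·d))·η²·(g(t) − y)·g(t))·(g(t) − y), and λ(t+1) = λ(t) + (‖x‖²/(m·d))·η²·(g(t) − y)²·λ(t) − (4‖x‖²/(m·d))·η·(g(t) − y)·g(t). -/
lemma nqm_aux {m : ℕ} (c s η e : ℝ) (χ v a v' a' : Fin m → ℝ)
    (hχ : ∀ i, χ i = 0 ∨ χ i = 1)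
    (haχ : ∀ i, a i * χ i = a i)
    (hv' : ∀ i, v' i = v i - η * e * a i)
    (ha' : ∀ i, a' i = a i - η * e * s ^ 2 * c * (v i * χ i)) :
    (∑ i, v' i * a' i =
      (1 + η ^ 2 * e ^ 2 * s ^ 2 * c) * (∑ i, v i * a i)
        - η * e * c * (∑ i, (s * v i * χ i) ^ 2) - η * e * (∑ i, (a i) ^ 2))
    ∧ (c * (∑ i, (s * v' i * χ i) ^ 2) + ∑ i, (a' i) ^ 2 =
      (1 + η ^ 2 * e ^ 2 * s ^ 2 * c) * c * (∑ i, (s * v i * χ i) ^ 2)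
        + (1 + η ^ 2 * e ^ 2 * s ^ 2 * c) * (∑ i, (a i) ^ 2)
        - 4 * η * e * s ^ 2 * c * (∑ i, v i * a i)) := by
  have ha0 : ∀ i, χ i = 0 → a i = 0 := by
    intro i h
    have h' := haχ i
    rw [h, mul_zero] at h'
    exact h'.symm
  have h1 : ∀ i, v' i * a' i =
      (1 + η ^ 2 * e ^ 2 * s ^ 2 * c) * (v i * a i)
        - η * e * c * (s * v i * χ i) ^ 2 - η * e * (a i) ^ 2 := by
    intro i
    rcases hχ i with h | h
    · rw [hv' i, ha' i, h, ha0 i h]; ring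
    · rw [hv' i, ha' i, h]; ring
  have h2 : ∀ i, c * (s * v' i * χ i) ^ 2 + (a' i) ^ 2 =
      (1 + η ^ 2 * e ^ 2 * s ^ 2 * c) * c * (s * v i * χ i) ^ 2
        + (1 + η ^ 2 * e ^ 2 * s ^ 2 * c) * (a i) ^ 2
        - 4 * η * e * s ^ 2 * c * (v i * a i) := by
    intro i
    rcases hχ i with h | h
    · rw [hv' i, ha' i, h, ha0 i h]; ring
    · rw [hv' i, ha' i, h]; ring
  constructor
  · calc ∑ i, v' i * a' i
        = ∑ i, ((1 + η ^ 2 * e ^ 2 * s ^ 2 * c) * (v i * a i)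
            - η * e * c * (s * v i * χ i) ^ 2 - η * e * (a i) ^ 2) :=
          Finset.sum_congr rfl fun i _ => h1 i
      _ = _ := by
          rw [Finset.sum_sub_distrib, Finset.sum_sub_distrib, ← Finset.mul_sum,
            ← Finset.mul_sum, ← Finset.mul_sum]
  · calc c * (∑ i, (s * v' i * χ i) ^ 2) + ∑ i, (a' i) ^ 2
        = ∑ i, (c * (s * v' i * χ i) ^ 2 + (a' i) ^ 2) := by
          rw [Finset.sum_add_distrib, ← Finset.mul_sum]
      _ = ∑ i, ((1 + η ^ 2 * e ^ 2 * s ^ 2 * c) * c * (s * v i * χ i) ^ 2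
            + (1 + η ^ 2 * e ^ 2 * s ^ 2 * c) * (a i) ^ 2
            - 4 * η * e * s ^ 2 * c * (v i * a i)) :=
          Finset.sum_congr rfl fun i _ => h2 i
      _ = _ := by
          rw [Finset.sum_sub_distrib, Finset.sum_add_distrib, ← Finset.mul_sum,
            ← Finset.mul_sum, ← Finset.mul_sum]




open RealInnerProductSpace

/-- **Exact dynamics equations for the NQM on a single training example.**
For every `t ≥ 0` the gradient-descent iterates of the NQM on a single training
example `(x, y)` satisfy
`g(t+1) − y = (1 − η·λ(t) + (‖x‖²/(m·d))·η²·(g(t) − y)·g(t))·(g(t) − y)` and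
`λ(t+1) = λ(t) + (‖x‖²/(m·d))·η²·(g(t) − y)²·λ(t) − (4‖x‖²/(m·d))·η·(g(t) − y)·g(t)`. -/
theorem nqm_single_example_dynamics
    (m d : ℕ) (hm : 1 ≤ m) (hd : 1 ≤ d)
    (x : EuclideanSpace ℝ (Fin d)) (y η : ℝ) (hη : 0 < η)
    (u₀ : Fin m → EuclideanSpace ℝ (Fin d)) (v₀ : Fin m → ℝ)
    -- the NQM (second-order Taylor expansion of the two-layer ReLU network at `(u₀, v₀)`)
    (G : (Fin m → EuclideanSpace ℝ (Fin d)) → (Fin m → ℝ) → ℝ)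
    (hG : ∀ u v, G u v =
      (1 / Real.sqrt (m * d)) * ∑ i, v₀ i * max ⟪u₀ i, x⟫ 0
      + (1 / Real.sqrt (m * d)) * ∑ i, v₀ i * ⟪u i - u₀ i, x⟫ *
          (if (0:ℝ) ≤ ⟪u₀ i, x⟫ then 1 else 0)
      + (1 / Real.sqrt (m * d)) * ∑ i, (v i - v₀ i) * max ⟪u₀ i, x⟫ 0
      + (1 / Real.sqrt (m * d)) * ∑ i, (v i - v₀ i) * ⟪u i - u₀ i, x⟫ *
          (if (0:ℝ) ≤ ⟪u₀ i, x⟫ then 1 else 0))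
    -- its gradient with respect to `u i` …
    (gradU : (Fin m → EuclideanSpace ℝ (Fin d)) → (Fin m → ℝ) → Fin m → EuclideanSpace ℝ (Fin d))
    (hgradU : ∀ u v i, gradU u v i =
      ((1 / Real.sqrt (m * d)) * v i * (if (0:ℝ) ≤ ⟪u₀ i, x⟫ then 1 else 0)) • x)
    -- … and with respect to `v i`
    (gradV : (Fin m → EuclideanSpace ℝ (Fin d)) → (Fin m → ℝ) → Fin m → ℝ)
    (hgradV : ∀ u v i, gradV u v i =
      (1 / Real.sqrt (m * d)) *
        (max ⟪u₀ i, x⟫ 0 + ⟪u i - u₀ i, x⟫ * (if (0:ℝ) ≤ ⟪u₀ i, x⟫ then 1 else 0)))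
    -- the tangent kernel
    (lam : (Fin m → EuclideanSpace ℝ (Fin d)) → (Fin m → ℝ) → ℝ)
    (hlam : ∀ u v, lam u v = (∑ i, ‖gradU u v i‖ ^ 2) + ∑ i, (gradV u v i) ^ 2)
    -- gradient descent on the squared loss `½(g − y)²` with step size `η`
    (U : ℕ → Fin m → EuclideanSpace ℝ (Fin d)) (V : ℕ → Fin m → ℝ)
    (hU0 : U 0 = u₀) (hV0 : V 0 = v₀)
    (hU : ∀ t i, U (t+1) i = U t i - (η * (G (U t) (V t) - y)) • gradU (U t) (V t) i)
    (hV : ∀ t i, V (t+1) i = V t i - η * (G (U t) (V t) - y) * gradV (U t) (V t) i)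
    (g lamT : ℕ → ℝ)
    (hg : ∀ t, g t = G (U t) (V t))
    (hlamT : ∀ t, lamT t = lam (U t) (V t)) :
    ∀ t : ℕ,
      g (t+1) - y =
        (1 - η * lamT t + (‖x‖ ^ 2 / (m * d)) * η ^ 2 * (g t - y) * g t) * (g t - y)
      ∧ lamT (t+1) =
          lamT t + (‖x‖ ^ 2 / (m * d)) * η ^ 2 * (g t - y) ^ 2 * lamT t
            - (4 * ‖x‖ ^ 2 / (m * d)) * η * (g t - y) * g t := by
  intro t
  have hm1 : (1:ℝ) ≤ (m:ℝ) := by exact_mod_cast hm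
  have hd1 : (1:ℝ) ≤ (d:ℝ) := by exact_mod_cast hd
  have hmd : (0:ℝ) < (m:ℝ) * (d:ℝ) := by nlinarith
  have hs2' : (1 / Real.sqrt ((m:ℝ) * (d:ℝ))) ^ 2 = 1 / ((m:ℝ) * (d:ℝ)) := by
    rw [div_pow, one_pow, Real.sq_sqrt hmd.le]
  -- `G` as a single sum
  have H1 : ∀ u v, G u v = ∑ i, v i * gradV u v i := by
    intro u v
    rw [hG u v]
    simp only [Finset.mul_sum]
    rw [← Finset.sum_add_distrib, ← Finset.sum_add_distrib, ← Finset.sum_add_distrib]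
    exact Finset.sum_congr rfl fun i _ => by rw [hgradV]; ring
  -- the tangent kernel in explicit form
  have H2 : ∀ u v, lam u v =
      ‖x‖ ^ 2 * (∑ i, (1 / Real.sqrt ((m:ℝ) * (d:ℝ)) * v i *
          (if (0:ℝ) ≤ ⟪u₀ i, x⟫ then (1:ℝ) else 0)) ^ 2)
        + ∑ i, (gradV u v i) ^ 2 := by
    intro u v
    rw [hlam u v]
    congr 1
    rw [Finset.mul_sum]
    exact Finset.sum_congr rfl fun i _ => by
      rw [hgradU, norm_smul, Real.norm_eq_abs, mul_pow, sq_abs]; ring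
  have hχ : ∀ i, (if (0:ℝ) ≤ ⟪u₀ i, x⟫ then (1:ℝ) else 0) = 0 ∨
      (if (0:ℝ) ≤ ⟪u₀ i, x⟫ then (1:ℝ) else 0) = 1 := by
    intro i; split_ifs <;> simp
  have haχ : ∀ i, gradV (U t) (V t) i * (if (0:ℝ) ≤ ⟪u₀ i, x⟫ then (1:ℝ) else 0)
      = gradV (U t) (V t) i := by
    intro i
    rw [hgradV]
    split_ifs with h
    · ring
    · rw [max_eq_right (le_of_not_ge h)]; ring
  have hinner : ∀ i, (⟪U (t+1) i - u₀ i, x⟫ : ℝ) =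
      ⟪U t i - u₀ i, x⟫ - η * (G (U t) (V t) - y) *
        (1 / Real.sqrt ((m:ℝ) * (d:ℝ)) * V t i *
          (if (0:ℝ) ≤ ⟪u₀ i, x⟫ then (1:ℝ) else 0)) * ‖x‖ ^ 2 := by
    intro i
    rw [hU t i, hgradU, smul_smul, sub_right_comm, inner_sub_left,
      real_inner_smul_left, real_inner_self_eq_norm_sq]
  have ha' : ∀ i, gradV (U (t+1)) (V (t+1)) i =
      gradV (U t) (V t) i - η * (G (U t) (V t) - y) *
        (1 / Real.sqrt ((m:ℝ) * (d:ℝ))) ^ 2 * ‖x‖ ^ 2 *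
        (V t i * (if (0:ℝ) ≤ ⟪u₀ i, x⟫ then (1:ℝ) else 0)) := by
    intro i
    rw [hgradV, hgradV, hinner i]
    split_ifs with h <;> ring
  have K := nqm_aux (m := m) (‖x‖ ^ 2) (1 / Real.sqrt ((m:ℝ) * (d:ℝ))) η
    (G (U t) (V t) - y)
    (fun i => if (0:ℝ) ≤ ⟪u₀ i, x⟫ then (1:ℝ) else 0)
    (V t) (gradV (U t) (V t)) (V (t+1)) (gradV (U (t+1)) (V (t+1)))
    hχ haχ (hV t) ha'
  have K1 : (∑ i, V (t+1) i * gradV (U (t+1)) (V (t+1)) i) =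
      (1 + η ^ 2 * (G (U t) (V t) - y) ^ 2 * (1 / Real.sqrt ((m:ℝ) * (d:ℝ))) ^ 2 * ‖x‖ ^ 2)
          * (∑ i, V t i * gradV (U t) (V t) i)
        - η * (G (U t) (V t) - y) * ‖x‖ ^ 2 *
          (∑ i, (1 / Real.sqrt ((m:ℝ) * (d:ℝ)) * V t i *
            (if (0:ℝ) ≤ ⟪u₀ i, x⟫ then (1:ℝ) else 0)) ^ 2)
        - η * (G (U t) (V t) - y) * (∑ i, (gradV (U t) (V t) i) ^ 2) := K.1
  have K2 : ‖x‖ ^ 2 * (∑ i, (1 / Real.sqrt ((m:ℝ) * (d:ℝ)) * V (t+1) i *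
          (if (0:ℝ) ≤ ⟪u₀ i, x⟫ then (1:ℝ) else 0)) ^ 2)
        + ∑ i, (gradV (U (t+1)) (V (t+1)) i) ^ 2 =
      (1 + η ^ 2 * (G (U t) (V t) - y) ^ 2 * (1 / Real.sqrt ((m:ℝ) * (d:ℝ))) ^ 2 * ‖x‖ ^ 2)
          * ‖x‖ ^ 2 * (∑ i, (1 / Real.sqrt ((m:ℝ) * (d:ℝ)) * V t i *
            (if (0:ℝ) ≤ ⟪u₀ i, x⟫ then (1:ℝ) else 0)) ^ 2)
        + (1 + η ^ 2 * (G (U t) (V t) - y) ^ 2 * (1 / Real.sqrt ((m:ℝ) * (d:ℝ))) ^ 2 * ‖x‖ ^ 2)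
          * (∑ i, (gradV (U t) (V t) i) ^ 2)
        - 4 * η * (G (U t) (V t) - y) * (1 / Real.sqrt ((m:ℝ) * (d:ℝ))) ^ 2 * ‖x‖ ^ 2 *
          (∑ i, V t i * gradV (U t) (V t) i) := K.2
  refine ⟨?_, ?_⟩
  · simp only [hg, hlamT]
    rw [H1 (U (t+1)) (V (t+1)), K1, ← H1 (U t) (V t), hs2']
    linear_combination (η * (G (U t) (V t) - y)) * H2 (U t) (V t)
  · simp only [hg, hlamT]
    rw [H2 (U (t+1)) (V (t+1)), K2, ← H1 (U t) (V t), hs2']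
    linear_combination (-(1 + ‖x‖ ^ 2 / ((m:ℝ) * (d:ℝ)) * η ^ 2 * (G (U t) (V t) - y) ^ 2))
      * H2 (U t) (V t)
end

section
/- (Monotonic convergence with sub-critical learning rates.) For every pair of constants C > 0 and C_u > 0 there exist constants c₁ > 0 and c₂ > 0, depending only on C and C_u, with the following property: for every m > 1 and every system (u, v, w) as in the context with u(0) ≤ C_u/m and 0 < v(0) < 2, setting δ := min(v(0), 2 − v(0)), if m ≥ c₁/δ², then for all t ≥ 0 one has u(t+1) ≤ (1 − δ + c₂/(m·δ))²·u(t), where (1 − δ + c₂/(m·δ))² < 1, and |v(t) − v(0)| ≤ c₂/(m·δ). In particular the loss decreases monotonically (geometrically) and the total change of the tangent kernel is at most c₂/(m·δ). -/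
set_option maxHeartbeats 1000000 in
/-- **Monotonic convergence with sub-critical learning rates** for the scalar
catapult-dynamics system of the NQM on a single training example.  For every
`C > 0` and `C_u > 0` there are constants `c₁, c₂ > 0` such that for every
width `m > 1` and every system `(u, v, w)` with `u 0 ≤ C_u/m`, `0 < v 0 < 2`
and, with `δ := min (v 0) (2 − v 0)`, `m ≥ c₁/δ²`, one has for every `t`
`u (t+1) ≤ (1 − δ + c₂/(m·δ))²·u t` with `(1 − δ + c₂/(m·δ))² < 1`, and
`|v t − v 0| ≤ c₂/(m·δ)`. -/
theorem nqm_subcritical_monotone_convergence :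
    ∀ C Cu : ℝ, 0 < C → 0 < Cu →
    ∃ c₁ c₂ : ℝ, 0 < c₁ ∧ 0 < c₂ ∧
      ∀ m : ℝ, 1 < m →
      ∀ u v w : ℕ → ℝ,
        (∀ t, 0 ≤ u t) →
        (∀ t, 0 ≤ v t) →
        (∀ t, (w t) ^ 2 = C ^ 2 * u t / m) →
        (∀ t, u (t+1) = (1 - v t + u t + w t) ^ 2 * u t) →
        (∀ t, v (t+1) = v t - u t * (4 - v t) - 4 * w t) →
        u 0 ≤ Cu / m → 0 < v 0 → v 0 < 2 →
        c₁ / (min (v 0) (2 - v 0)) ^ 2 ≤ m →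
        ((1 - min (v 0) (2 - v 0) + c₂ / (m * min (v 0) (2 - v 0))) ^ 2 < 1 ∧
          ∀ t : ℕ,
            u (t+1) ≤
              (1 - min (v 0) (2 - v 0) + c₂ / (m * min (v 0) (2 - v 0))) ^ 2 * u t ∧
            |v t - v 0| ≤ c₂ / (m * min (v 0) (2 - v 0))) := by
  intro C Cu hC hCu
  have hsq : 0 < Real.sqrt Cu := Real.sqrt_pos.mpr hCu
  set K : ℝ := Cu + C * Real.sqrt Cu with hKdef
  have hK : 0 < K := by positivity
  refine ⟨18 * K, 9 * K, by positivity, by positivity, ?_⟩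
  intro m hm u v w hu hv hw hrecu hrecv hu0 hv0 hv2 hmge
  have hm0 : (0:ℝ) < m := by linarith
  set δ : ℝ := min (v 0) (2 - v 0) with hδdef
  have hδv : δ ≤ v 0 := min_le_left _ _
  have hδ2 : δ ≤ 2 - v 0 := min_le_right _ _
  have hδpos : 0 < δ := lt_min hv0 (by linarith)
  have hδ1 : δ ≤ 1 := by linarith
  set E : ℝ := 9 * K / (m * δ) with hEdef
  have hEpos : 0 < E := by positivity
  have hmδ : 18 * K ≤ m * δ ^ 2 := by
    have := (div_le_iff₀ (by positivity : (0:ℝ) < δ ^ 2)).mp hmge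
    linarith [this]
  have hE2 : E ≤ δ / 2 := by
    rw [hEdef, div_le_div_iff₀ (by positivity) (by norm_num)]
    have hr : δ * (m * δ) = m * δ ^ 2 := by ring
    linarith [hr, hmδ]
  set r : ℝ := 1 - δ / 2 with hrdef
  have hr0 : 0 ≤ r := by rw [hrdef]; linarith
  have hr1 : r ≤ 1 := by rw [hrdef]; linarith
  have hrt1 : ∀ t : ℕ, r ^ t ≤ 1 := fun t => pow_le_one₀ hr0 hr1
  have hrt0 : ∀ t : ℕ, 0 ≤ r ^ t := fun t => pow_nonneg hr0 t
  set ε' : ℝ := 8 * K / (m * δ) with hε'def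
  have hε'pos : 0 < ε' := by positivity
  have hε'E : ε' ≤ E := by
    rw [hε'def, hEdef]
    gcongr
    norm_num
  have hKmδ : K / m ≤ K / (m * δ) := by
    rw [div_le_div_iff₀ hm0 (by positivity)]
    have h1 : 0 ≤ K * m * (1 - δ) := by
      have : (0:ℝ) ≤ 1 - δ := by linarith
      positivity
    have h2 : K * (m * δ) = K * m - K * m * (1 - δ) := by ring
    linarith [h1, h2]
  have hEK : ε' + K / m ≤ E := by
    have h9 : 8 * K / (m * δ) + K / (m * δ) = 9 * K / (m * δ) := by ring
    rw [hε'def, hEdef]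
    linarith [hKmδ, h9]
  -- bound on w
  have hwb : ∀ t : ℕ, u t ≤ (r ^ t) ^ 2 * (Cu / m) →
      |w t| ≤ C * Real.sqrt Cu / m * r ^ t := by
    intro t ht
    have hb0 : 0 ≤ C * Real.sqrt Cu / m * r ^ t := by positivity
    have h1 : w t ^ 2 ≤ (C * Real.sqrt Cu / m * r ^ t) ^ 2 := by
      rw [hw t]
      have h2 : (C * Real.sqrt Cu / m * r ^ t) ^ 2
          = C ^ 2 * ((r ^ t) ^ 2 * (Cu / m)) / m := by
        rw [show (C * Real.sqrt Cu / m * r ^ t) ^ 2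
            = C ^ 2 * Real.sqrt Cu ^ 2 / m ^ 2 * (r ^ t) ^ 2 from by ring,
          Real.sq_sqrt hCu.le]
        ring
      rw [h2]
      gcongr
    calc |w t| = Real.sqrt (w t ^ 2) := (Real.sqrt_sq_eq_abs _).symm
      _ ≤ Real.sqrt ((C * Real.sqrt Cu / m * r ^ t) ^ 2) := Real.sqrt_le_sqrt h1
      _ = |C * Real.sqrt Cu / m * r ^ t| := Real.sqrt_sq_eq_abs _
      _ = C * Real.sqrt Cu / m * r ^ t := abs_of_nonneg hb0
  -- the one-step lemma
  have step : ∀ t : ℕ, u t ≤ (r ^ t) ^ 2 * u 0 → |v t - v 0| ≤ ε' * (1 - r ^ t) →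
      u (t+1) ≤ (1 - δ + E) ^ 2 * u t ∧
      u (t+1) ≤ (r ^ (t+1)) ^ 2 * u 0 ∧
      |v (t+1) - v 0| ≤ ε' * (1 - r ^ (t+1)) := by
    intro t ihu ihv
    have hut2 : u t ≤ (r ^ t) ^ 2 * (Cu / m) :=
      ihu.trans (mul_le_mul_of_nonneg_left hu0 (sq_nonneg _))
    have hsq1 : (r ^ t) ^ 2 ≤ r ^ t := by
      have h := mul_le_mul_of_nonneg_left (hrt1 t) (hrt0 t)
      have h2 : (r ^ t) ^ 2 = r ^ t * r ^ t := by ring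
      have h3 : r ^ t * 1 = r ^ t := by ring
      linarith [h, h2, h3]
    have hut : u t ≤ r ^ t * (Cu / m) :=
      hut2.trans (mul_le_mul_of_nonneg_right hsq1 (by positivity))
    have hutCu : u t ≤ Cu / m := by
      have h2 : r ^ t * (Cu / m) ≤ 1 * (Cu / m) :=
        mul_le_mul_of_nonneg_right (hrt1 t) (by positivity)
      linarith [hut, h2]
    have hwt := hwb t hut2
    have hwabs := abs_le.mp hwt
    have hwt1 : |w t| ≤ C * Real.sqrt Cu / m := by
      have h1 : C * Real.sqrt Cu / m * r ^ t ≤ C * Real.sqrt Cu / m * 1 :=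
        mul_le_mul_of_nonneg_left (hrt1 t) (by positivity)
      linarith [hwt, h1]
    have hwabs1 := abs_le.mp hwt1
    have hvabs := abs_le.mp ihv
    have hεr : ε' * (1 - r ^ t) ≤ ε' := by
      have h := mul_nonneg hε'pos.le (hrt0 t)
      have h2 : ε' * (1 - r ^ t) = ε' - ε' * r ^ t := by ring
      linarith [h, h2]
    have hKm : Cu / m + C * Real.sqrt Cu / m = K / m := by rw [hKdef]; ring
    have hCK : C * Real.sqrt Cu / m ≤ K / m := by
      have : 0 ≤ Cu / m := by positivity
      linarith [hKm, this]
    have ha : |1 - v t + u t + w t| ≤ 1 - δ + E := by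
      rw [abs_le]
      constructor
      · linarith [hvabs.2, hwabs1.1, hu t, hδ2, hεr, hEK, hCK]
      · linarith [hvabs.1, hwabs1.2, hutCu, hδv, hεr, hEK, hKm]
    have h1δE : 0 ≤ 1 - δ + E := by linarith
    have haa := abs_le.mp ha
    have hstep1 : u (t+1) ≤ (1 - δ + E) ^ 2 * u t := by
      rw [hrecu t]
      exact mul_le_mul_of_nonneg_right (sq_le_sq' haa.1 haa.2) (hu t)
    refine ⟨hstep1, ?_, ?_⟩
    · have hEr : 1 - δ + E ≤ r := by rw [hrdef]; linarith [hE2]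
      have h2 : (1 - δ + E) ^ 2 ≤ r ^ 2 := pow_le_pow_left₀ h1δE hEr 2
      have h3 : (1 - δ + E) ^ 2 * u t ≤ r ^ 2 * u t :=
        mul_le_mul_of_nonneg_right h2 (hu t)
      have h5 : r ^ 2 * u t ≤ r ^ 2 * ((r ^ t) ^ 2 * u 0) :=
        mul_le_mul_of_nonneg_left ihu (sq_nonneg r)
      have h6 : r ^ 2 * ((r ^ t) ^ 2 * u 0) = (r ^ (t+1)) ^ 2 * u 0 := by ring
      linarith [hstep1, h3, h5, h6]
    · -- v step
      have hvt4 : v t ≤ 5 / 2 := by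
        linarith [hvabs.2, hεr, hε'E, hE2]
      have hv4 : 0 ≤ u t * (4 - v t) :=
        mul_nonneg (hu t) (by linarith [hv t])
      have hv4' : u t * (4 - v t) ≤ 4 * u t := by
        have h := mul_le_mul_of_nonneg_left (show 4 - v t ≤ 4 by linarith [hv t]) (hu t)
        linarith [h]
      have hsum : 4 * u t + 4 * (C * Real.sqrt Cu / m * r ^ t) ≤ 4 * K / m * r ^ t := by
        have h7 : 4 * (r ^ t * (Cu / m)) + 4 * (C * Real.sqrt Cu / m * r ^ t)
            = 4 * K / m * r ^ t := by rw [hKdef]; ring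
        linarith [hut, h7]
      have hid : ε' * (1 - r ^ (t+1)) = ε' * (1 - r ^ t) + 4 * K / m * r ^ t := by
        rw [hε'def, pow_succ, hrdef]
        field_simp
        ring
      rw [hrecv t, abs_le]
      constructor
      · linarith [hvabs.1, hwabs.2, hv4', hsum, hid]
      · linarith [hvabs.2, hwabs.1, hv4, hsum, hid]
  -- the invariant by induction
  have inv : ∀ t : ℕ, u t ≤ (r ^ t) ^ 2 * u 0 ∧ |v t - v 0| ≤ ε' * (1 - r ^ t) := by
    intro t
    induction t with
    | zero => simp
    | succ t ih =>
      obtain ⟨h1, h2, h3⟩ := step t ih.1 ih.2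
      exact ⟨h2, h3⟩
  constructor
  · have hEr : 1 - δ + E ≤ 1 - δ / 2 := by linarith [hE2]
    have h01 : 0 ≤ 1 - δ + E := by linarith
    have h2 : (1 - δ + E) ^ 2 ≤ (1 - δ / 2) ^ 2 := pow_le_pow_left₀ h01 hEr 2
    have h3 : (1 - δ / 2) ^ 2 < 1 := by nlinarith [hδpos, hδ1]
    linarith [h2, h3]
  · intro t
    obtain ⟨ih1, ih2⟩ := inv t
    obtain ⟨h1, _, _⟩ := step t ih1 ih2
    refine ⟨h1, ?_⟩
    have hεr : ε' * (1 - r ^ t) ≤ ε' := by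
      have h := mul_nonneg hε'pos.le (hrt0 t)
      have h2 : ε' * (1 - r ^ t) = ε' - ε' * r ^ t := by ring
      linarith [h, h2]
    linarith [ih2, hεr, hε'E]
end

section
/- (Increasing phase of the catapult.) For all constants C > 0, C_u > 0 and C'_u > 0 there exist constants c₁ ≥ 3, c₂ > 0 and c₃ > 0, depending only on C, C_u and C'_u, with the following property: let m ≥ c₁ and let (u, v, w) be a system as in the context with u(0) ≤ C_u/m and δ := v(0) − 2 satisfying c₂·(log m)/√m ≤ δ ≤ 2 − c₂·(log m)/√m. Then for every T ∈ ℕ such that u(t) ≤ C'_u·δ²/log m for all 0 ≤ t ≤ T, the following hold: (i) for all 0 ≤ t < T, u(t+1) ≥ (1 + δ − c₃·δ/log m)²·u(t), and (1 + δ − c₃·δ/log m)² > 1 (so u increases exponentially); (ii) for all 0 ≤ t ≤ T, |v(t) − v(0)| ≤ c₃·δ/log m. -/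
/-!
While `u` stays below `C'_u δ² / log m`, the three perturbations `|v t - v 0|`, `u t` and
`|w t| = C √(u t) / √m` of the multiplier `1 - v t + u t + w t ≈ -(1 + δ)` are all
`O(δ / log m)`, so `u` grows by the factor `(1 + δ - O(δ / log m))²` at each step.
The drift of `v` is controlled by the potential `5 u / δ + 12 C √u / (δ √m)`: one step moves `v`
by at most `5 u + 4 |w|`, and since `u` grows at least by the factor `1 + δ` (so `√u` by
`1 + δ / 3`), the potential grows at least by as much. Hence `|v t - v 0|` stays below the
potential, by induction on `t`.
-/

open Real

structure IsCatapult (C m : ℝ) (u v w : ℕ → ℝ) : Prop where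
  u_nonneg : ∀ t, 0 ≤ u t
  v_nonneg : ∀ t, 0 ≤ v t
  w_sq : ∀ t, w t ^ 2 = C ^ 2 * u t / m
  u_succ : ∀ t, u (t + 1) = (1 - v t + u t + w t) ^ 2 * u t
  v_succ : ∀ t, v (t + 1) = v t - u t * (4 - v t) - 4 * w t

noncomputable def driftPotential (δ K x : ℝ) : ℝ := 5 / δ * x + 12 * K / δ * √x

theorem one_add_div_three_mul_sqrt_le {δ x y : ℝ} (hδ : 0 ≤ δ) (hδ3 : δ ≤ 3) (hx : 0 ≤ x)
    (hxy : (1 + δ) * x ≤ y) : (1 + δ / 3) * √x ≤ √y := by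
  have hcoef : (1 + δ / 3) ^ 2 ≤ 1 + δ := by nlinarith
  rw [Real.le_sqrt (by positivity) ((mul_nonneg (by linarith) hx).trans hxy), mul_pow,
    Real.sq_sqrt hx]
  exact (mul_le_mul_of_nonneg_right hcoef hx).trans hxy

theorem driftPotential_step {δ K x y : ℝ} (hδ : 0 < δ) (hδ3 : δ ≤ 3) (hK : 0 ≤ K) (hx : 0 ≤ x)
    (hxy : (1 + δ) * x ≤ y) :
    5 * x + 4 * (K * √x) + driftPotential δ K x ≤ driftPotential δ K y := by
  have hsqrt := one_add_div_three_mul_sqrt_le hδ.le hδ3 hx hxy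
  calc 5 * x + 4 * (K * √x) + driftPotential δ K x
      = 5 / δ * ((1 + δ) * x) + 12 * K / δ * ((1 + δ / 3) * √x) := by
        unfold driftPotential; field_simp; ring
    _ ≤ driftPotential δ K y := by unfold driftPotential; gcongr

theorem driftPotential_add_le {δ L m C Cu' x : ℝ} (hδ : 0 < δ) (hδ2 : δ ≤ 2) (hL : 1 ≤ L)
    (hLm : L ≤ δ * √m) (hC : 0 ≤ C) (hCu' : 0 ≤ Cu')
    (hxle : x ≤ Cu' * δ ^ 2 / L) :
    driftPotential δ (C / √m) x + x + C / √m * √x ≤ (7 * Cu' + 14 * C * √Cu') * δ / L := by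
  have hL0 : 0 < L := by linarith
  have hm : 0 < √m := pos_of_mul_pos_right (hL0.trans_le hLm) hδ.le
  have hK : C / √m ≤ C * δ / L := by
    rw [div_le_div_iff₀ hm hL0, mul_assoc]
    exact mul_le_mul_of_nonneg_left hLm hC
  have hs : √x ≤ √Cu' * δ := by
    rw [← Real.sqrt_sq hδ.le, ← Real.sqrt_mul hCu']
    exact Real.sqrt_le_sqrt (hxle.trans (div_le_self (by positivity) hL))
  have hw : C / √m * √x ≤ C * √Cu' * δ ^ 2 / L :=
    calc C / √m * √x ≤ C * δ / L * (√Cu' * δ) :=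
          mul_le_mul hK hs (Real.sqrt_nonneg _) (by positivity)
      _ = C * √Cu' * δ ^ 2 / L := by ring
  have hδ2' : δ ^ 2 ≤ 2 * δ := by nlinarith
  have e₁ : 5 / δ * x ≤ 5 * Cu' * δ / L :=
    calc 5 / δ * x ≤ 5 / δ * (Cu' * δ ^ 2 / L) := by gcongr
      _ = 5 * Cu' * δ / L := by field_simp
  have e₂ : 12 * (C / √m) / δ * √x ≤ 12 * C * √Cu' * δ / L :=
    calc 12 * (C / √m) / δ * √x = 12 / δ * (C / √m * √x) := by ring
      _ ≤ 12 / δ * (C * √Cu' * δ ^ 2 / L) := by gcongr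
      _ = 12 * C * √Cu' * δ / L := by field_simp
  have e₃ : x ≤ 2 * Cu' * δ / L :=
    calc x ≤ Cu' * δ ^ 2 / L := hxle
      _ ≤ Cu' * (2 * δ) / L := by gcongr
      _ = 2 * Cu' * δ / L := by ring
  have e₄ : C / √m * √x ≤ 2 * C * √Cu' * δ / L :=
    calc C / √m * √x ≤ C * √Cu' * δ ^ 2 / L := hw
      _ ≤ C * √Cu' * (2 * δ) / L := by gcongr
      _ = 2 * C * √Cu' * δ / L := by ring
  have hsum : (7 * Cu' + 14 * C * √Cu') * δ / L = 5 * Cu' * δ / L + 12 * C * √Cu' * δ / L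
      + 2 * Cu' * δ / L + 2 * C * √Cu' * δ / L := by ring
  unfold driftPotential
  linarith

namespace IsCatapult

variable {C m : ℝ} {u v w : ℕ → ℝ}

theorem abs_w (h : IsCatapult C m u v w) (hC : 0 ≤ C) (hm : 0 ≤ m) (t : ℕ) :
    |w t| = C / √m * √(u t) := by
  have hw : C ^ 2 * u t / m = (C / √m) ^ 2 * u t := by rw [div_pow, Real.sq_sqrt hm]; ring
  rw [← Real.sqrt_sq_eq_abs, h.w_sq, hw, Real.sqrt_mul (sq_nonneg _), Real.sqrt_sq (by positivity)]

theorem abs_v_succ_sub_le (h : IsCatapult C m u v w) (t : ℕ) :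
    |v (t + 1) - v t| ≤ u t * |4 - v t| + 4 * |w t| := by
  rw [h.v_succ, show v t - u t * (4 - v t) - 4 * w t - v t = -(u t * (4 - v t) + 4 * w t) by ring,
    abs_neg]
  calc |u t * (4 - v t) + 4 * w t| ≤ |u t * (4 - v t)| + |4 * w t| := abs_add_le _ _
    _ = u t * |4 - v t| + 4 * |w t| := by
      rw [abs_mul, abs_mul, abs_of_nonneg (h.u_nonneg t), abs_of_pos (four_pos : (0 : ℝ) < 4)]

theorem sq_mul_le_u_succ (h : IsCatapult C m u v w) {δ ε : ℝ} (hv0 : v 0 = 2 + δ)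
    (hε : ε ≤ 1 + δ) {t : ℕ} (hdev : |v t - v 0| + u t + |w t| ≤ ε) :
    (1 + δ - ε) ^ 2 * u t ≤ u (t + 1) := by
  have hmul : 1 + δ - ε ≤ -(1 - v t + u t + w t) := by
    linarith [neg_abs_le (v t - v 0), le_abs_self (w t)]
  rw [h.u_succ, ← neg_sq (1 - v t + u t + w t)]
  exact mul_le_mul_of_nonneg_right (pow_le_pow_left₀ (by linarith) hmul 2) (h.u_nonneg t)

theorem abs_v_sub_v_zero_le_driftPotential (h : IsCatapult C m u v w) (hC : 0 ≤ C) (hm : 0 ≤ m)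
    {δ : ℝ} (hv0 : v 0 = 2 + δ) (hδ : 0 < δ) (hδ3 : δ ≤ 3) {T : ℕ}
    (hsmall : ∀ t < T, driftPotential δ (C / √m) (u t) + u t + |w t| ≤ δ / 2) :
    ∀ t ≤ T, |v t - v 0| ≤ driftPotential δ (C / √m) (u t) := by
  intro t ht
  induction t with
  | zero =>
    rw [sub_self, abs_zero]
    exact add_nonneg (mul_nonneg (by positivity) (h.u_nonneg 0)) (by positivity)
  | succ n ih =>
    have hn : n < T := ht
    have hdev := ih hn.le
    have hsmall_n := hsmall n hn
    have hu := h.u_nonneg n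
    have hgrowth : (1 + δ) * u n ≤ u (n + 1) :=
      calc (1 + δ) * u n ≤ (1 + δ - δ / 2) ^ 2 * u n := by gcongr; nlinarith
        _ ≤ u (n + 1) := h.sq_mul_le_u_succ hv0 (by linarith) (by linarith)
    have hv4 : |4 - v n| ≤ 5 := by
      rw [abs_le]
      constructor <;> linarith [h.v_nonneg n, le_abs_self (v n - v 0), abs_nonneg (w n)]
    calc |v (n + 1) - v 0| ≤ |v (n + 1) - v n| + |v n - v 0| := abs_sub_le _ _ _
      _ ≤ (u n * |4 - v n| + 4 * |w n|) + driftPotential δ (C / √m) (u n) :=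
        add_le_add (h.abs_v_succ_sub_le n) hdev
      _ ≤ 5 * u n + 4 * (C / √m * √(u n)) + driftPotential δ (C / √m) (u n) := by
        rw [h.abs_w hC hm]; nlinarith
      _ ≤ driftPotential δ (C / √m) (u (n + 1)) :=
        driftPotential_step hδ hδ3 (by positivity) hu hgrowth

end IsCatapult

/-- **Increasing phase of the catapult.**  For all `C, C_u, C'_u > 0` there are
constants `c₁ ≥ 3`, `c₂ > 0`, `c₃ > 0` such that for every `m ≥ c₁` and every
catapult system `(u, v, w)` with `u 0 ≤ C_u/m` and
`δ := v 0 − 2 ∈ [c₂·log m/√m, 2 − c₂·log m/√m]`, and every `T` such that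
`u t ≤ C'_u·δ²/log m` for all `t ≤ T`:
(i) `u` increases exponentially with ratio at least `(1 + δ − c₃·δ/log m)² > 1`
on `[0, T)`, and (ii) `|v t − v 0| ≤ c₃·δ/log m` on `[0, T]`. -/
theorem nqm_catapult_increasing_phase :
    ∀ C Cu Cu' : ℝ, 0 < C → 0 < Cu → 0 < Cu' →
    ∃ c₁ c₂ c₃ : ℝ, 3 ≤ c₁ ∧ 0 < c₂ ∧ 0 < c₃ ∧
      ∀ m : ℝ, c₁ ≤ m →
      ∀ u v w : ℕ → ℝ,
        (∀ t, 0 ≤ u t) →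
        (∀ t, 0 ≤ v t) →
        (∀ t, (w t) ^ 2 = C ^ 2 * u t / m) →
        (∀ t, u (t+1) = (1 - v t + u t + w t) ^ 2 * u t) →
        (∀ t, v (t+1) = v t - u t * (4 - v t) - 4 * w t) →
        u 0 ≤ Cu / m →
        c₂ * Real.log m / Real.sqrt m ≤ v 0 - 2 →
        v 0 - 2 ≤ 2 - c₂ * Real.log m / Real.sqrt m →
        ∀ T : ℕ, (∀ t ≤ T, u t ≤ Cu' * (v 0 - 2) ^ 2 / Real.log m) →
          (1 < (1 + (v 0 - 2) - c₃ * (v 0 - 2) / Real.log m) ^ 2 ∧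
           (∀ t < T,
              (1 + (v 0 - 2) - c₃ * (v 0 - 2) / Real.log m) ^ 2 * u t ≤ u (t+1)) ∧
           (∀ t ≤ T, |v t - v 0| ≤ c₃ * (v 0 - 2) / Real.log m)) := by
  intro C _ Cu' hC _ hCu'
  set c₃ := 7 * Cu' + 14 * C * √Cu'
  have hc₃ : 0 < c₃ := by positivity
  refine ⟨exp (2 * c₃ + 2), 1, c₃, by linarith [add_one_le_exp (2 * c₃ + 2)], one_pos, hc₃, ?_⟩
  intro m hm u v w hu hv hw hU hV _ hlb hub T hT
  have h : IsCatapult C m u v w := ⟨hu, hv, hw, hU, hV⟩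
  set δ := v 0 - 2 with hδ_def
  set L := log m
  have hm0 : 0 < m := (exp_pos _).trans_le hm
  have hL : 2 * c₃ + 2 ≤ L := (le_log_iff_exp_le hm0).mpr hm
  have hL0 : 0 < L / √m := div_pos (by linarith) (sqrt_pos.mpr hm0)
  rw [one_mul] at hlb hub
  have hδ : 0 < δ := hL0.trans_le hlb
  have hδ2 : δ ≤ 2 := by linarith
  have hLm : L ≤ δ * √m := (div_le_iff₀ (sqrt_pos.mpr hm0)).mp hlb
  have hε : c₃ * δ / L ≤ δ / 2 := by
    rw [div_le_iff₀ (by linarith)]; nlinarith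
  have hbudget : ∀ t ≤ T, driftPotential δ (C / √m) (u t) + u t + |w t| ≤ c₃ * δ / L := by
    intro t ht
    rw [h.abs_w hC.le hm0.le]
    exact driftPotential_add_le hδ hδ2 (by linarith) hLm hC.le hCu'.le (hT t ht)
  have hdrift := h.abs_v_sub_v_zero_le_driftPotential hC.le hm0.le (by rw [hδ_def]; ring) hδ
    (by linarith) fun t ht => (hbudget t ht.le).trans hε
  refine ⟨by nlinarith, fun t ht => ?_, fun t ht => ?_⟩
  · exact h.sq_mul_le_u_succ (by rw [hδ_def]; ring) (by linarith)
      (by linarith [hdrift t ht.le, hbudget t ht.le])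
  · linarith [hdrift t ht, hbudget t ht, hu t, abs_nonneg (w t)]
end

section
/- (v stays bounded away from 4 during the increasing phase.) For all constants C > 0, C_u > 0 and C'_u > 0 there exist constants c₁ ≥ 3, c₂ > 0 and c₄ > 0, depending only on C, C_u and C'_u, with the following property: let m ≥ c₁ and let (u, v, w) be a system as in the context with u(0) ≤ C_u/m and δ := v(0) − 2 satisfying c₂·(log m)/√m ≤ δ ≤ 2 − c₂·(log m)/√m. Then for every T ∈ ℕ such that u(t) ≤ C'_u·δ²/log m for all 0 ≤ t ≤ T, one has v(T) − v(0) ≤ c₄/√(m·log m), and consequently v(T) < 4 − (c₂/2)·(log m)/√m. -/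
lemma geom_sum_le_aux {f : ℕ → ℝ} {q x : ℝ} (hx : 0 < x) (hq : 1 + x ≤ q)
    (hf0 : ∀ s, 0 ≤ f s) : ∀ t : ℕ, (∀ s < t, q * f s ≤ f (s+1)) →
    ∑ s ∈ Finset.range t, f s ≤ f t / x := by
  intro t
  induction t with
  | zero => intro _; simp; exact div_nonneg (hf0 0) hx.le
  | succ n ih =>
    intro hstep
    rw [Finset.sum_range_succ]
    have h1 : ∑ s ∈ Finset.range n, f s ≤ f n / x := ih (fun s hs => hstep s (by omega))
    have h2 : q * f n ≤ f (n+1) := hstep n (by omega)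
    have h3 : 0 ≤ f n := hf0 n
    have h4 : f n / x + f n ≤ f (n+1) / x := by
      rw [div_add' _ _ _ hx.ne', div_le_div_iff₀ hx hx]
      nlinarith [mul_le_mul_of_nonneg_right hq h3, mul_le_mul_of_nonneg_right h2 hx.le]
    linarith

set_option maxHeartbeats 2000000 in
/-- **`v` stays bounded away from `4` during the increasing phase.**  For all
`C, C_u, C'_u > 0` there are constants `c₁ ≥ 3`, `c₂ > 0` and `c₄ > 0` such
that for every `m ≥ c₁` and every catapult system `(u, v, w)` with
`u 0 ≤ C_u/m` and `δ := v 0 − 2 ∈ [c₂·log m/√m, 2 − c₂·log m/√m]`, and every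
`T` with `u t ≤ C'_u·δ²/log m` for all `t ≤ T`, one has
`v T − v 0 ≤ c₄/√(m·log m)` and consequently `v T < 4 − (c₂/2)·log m/√m`. -/
theorem nqm_catapult_v_below_four :
    ∀ C Cu Cu' : ℝ, 0 < C → 0 < Cu → 0 < Cu' →
    ∃ c₁ c₂ c₄ : ℝ, 3 ≤ c₁ ∧ 0 < c₂ ∧ 0 < c₄ ∧
      ∀ m : ℝ, c₁ ≤ m →
      ∀ u v w : ℕ → ℝ,
        (∀ t, 0 ≤ u t) →
        (∀ t, 0 ≤ v t) →
        (∀ t, (w t) ^ 2 = C ^ 2 * u t / m) →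
        (∀ t, u (t+1) = (1 - v t + u t + w t) ^ 2 * u t) →
        (∀ t, v (t+1) = v t - u t * (4 - v t) - 4 * w t) →
        u 0 ≤ Cu / m →
        c₂ * Real.log m / Real.sqrt m ≤ v 0 - 2 →
        v 0 - 2 ≤ 2 - c₂ * Real.log m / Real.sqrt m →
        ∀ T : ℕ, (∀ t ≤ T, u t ≤ Cu' * (v 0 - 2) ^ 2 / Real.log m) →
          (v T - v 0 ≤ c₄ / Real.sqrt (m * Real.log m) ∧
           v T < 4 - (c₂ / 2) * Real.log m / Real.sqrt m) := by
  intro C Cu Cu' hC hCu hCu'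
  set c₄ : ℝ := 16 * C * Real.sqrt Cu' with hc₄def
  have hc₄pos : 0 < c₄ := by
    have := Real.sqrt_pos.mpr hCu'
    positivity
  set L₀ : ℝ := max 1 (max (32 * Cu') (4 * c₄)) with hL₀def
  clear_value c₄
  refine ⟨max 3 (max (Real.exp L₀) (64 * C ^ 2 * Cu')), 1, c₄, le_max_left _ _,
    one_pos, hc₄pos, ?_⟩
  intro m hm u v w hu hv hw hrecu hrecv hu0 hδlo hδhi T hT
  -- basic facts about m and L := log m
  have hm3 : (3:ℝ) ≤ m := le_trans (le_max_left _ _) hm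
  have hm0 : (0:ℝ) < m := by linarith
  have hL₀1 : (1:ℝ) ≤ L₀ := le_max_left _ _
  have hLge : L₀ ≤ Real.log m := by
    rw [Real.le_log_iff_exp_le hm0]
    exact le_trans (le_trans (le_max_left _ _) (le_max_right 3 _)) hm
  set L : ℝ := Real.log m with hLdef
  clear_value L
  have hL1 : (1:ℝ) ≤ L := le_trans hL₀1 hLge
  have hL0 : (0:ℝ) < L := by linarith
  have hL32 : 32 * Cu' ≤ L := le_trans (le_trans (le_max_left _ _) (le_max_right _ _)) hLge
  have hL4c₄ : 4 * c₄ ≤ L := le_trans (le_trans (le_max_right _ _) (le_max_right _ _)) hLge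
  have hm64 : 64 * C ^ 2 * Cu' ≤ m :=
    le_trans (le_trans (le_max_right _ _) (le_max_right 3 _)) hm
  have hsm : (0:ℝ) < Real.sqrt m := Real.sqrt_pos.mpr hm0
  have hsL : (0:ℝ) < Real.sqrt L := Real.sqrt_pos.mpr hL0
  have hsL1 : (1:ℝ) ≤ Real.sqrt L := Real.one_le_sqrt.mpr hL1
  set δ : ℝ := v 0 - 2 with hδdef
  clear_value δ
  rw [one_mul] at hδlo hδhi
  have hδpos : 0 < δ := lt_of_lt_of_le (div_pos hL0 hsm) hδlo
  have hδ2 : δ ≤ 2 := by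
    have : 0 < L / Real.sqrt m := div_pos hL0 hsm
    linarith
  -- |w t| in terms of u t
  have hw_abs : ∀ t, |w t| = C * Real.sqrt (u t) / Real.sqrt m := by
    intro t
    rw [← Real.sqrt_sq_eq_abs, hw t, div_eq_mul_inv,
      Real.sqrt_mul (mul_nonneg (sq_nonneg C) (hu t)),
      Real.sqrt_mul (sq_nonneg C), Real.sqrt_sq hC.le, Real.sqrt_inv]
    ring
  -- u is small along [0, T]
  have hu_small : ∀ t, t ≤ T → u t ≤ δ / 8 := by
    intro t ht
    refine le_trans (hT t ht) ?_
    rw [div_le_div_iff₀ hL0 (by norm_num : (0:ℝ) < 8)]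
    nlinarith [mul_nonneg hCu'.le (mul_nonneg hδpos.le (sub_nonneg.mpr hδ2)),
      mul_nonneg (sub_nonneg.mpr hL32) hδpos.le]
  -- |w| is small along [0, T]
  have hw_small : ∀ t, t ≤ T → |w t| ≤ δ / 8 := by
    intro t ht
    have hsq : w t ^ 2 ≤ (δ / 8) ^ 2 := by
      rw [hw t]
      have h1 : C ^ 2 * u t ≤ C ^ 2 * (Cu' * δ ^ 2 / L) := by
        exact mul_le_mul_of_nonneg_left (hT t ht) (by positivity)
      have hmL : 64 * C ^ 2 * Cu' ≤ L * m := by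
        nlinarith [mul_le_mul_of_nonneg_right hL1 hm0.le]
      have h2 : C ^ 2 * (Cu' * δ ^ 2 / L) / m ≤ (δ / 8) ^ 2 := by
        have e : C ^ 2 * (Cu' * δ ^ 2 / L) / m = C ^ 2 * Cu' * δ ^ 2 / (L * m) := by
          field_simp
        rw [e, div_le_iff₀ (mul_pos hL0 hm0)]
        nlinarith [mul_le_mul_of_nonneg_right hmL (sq_nonneg δ)]
      refine le_trans ?_ h2
      gcongr
    have := Real.sqrt_le_sqrt hsq
    rwa [Real.sqrt_sq_eq_abs, Real.sqrt_sq (by positivity)] at this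
  -- sqrt of u_max
  have hsqrt_umax : Real.sqrt (Cu' * δ ^ 2 / L) = Real.sqrt Cu' * δ / Real.sqrt L := by
    rw [Real.sqrt_div (mul_nonneg hCu'.le (sq_nonneg δ)), Real.sqrt_mul hCu'.le,
      Real.sqrt_sq hδpos.le]
  -- bounds on sums, given geometric growth
  have sum_u_le : ∀ t, t ≤ T → (∀ s < t, (1 + δ/4)^2 * u s ≤ u (s+1)) →
      ∑ s ∈ Finset.range t, u s ≤ δ / 16 := by
    intro t ht hgrow
    have hq : 1 + δ/2 ≤ (1 + δ/4)^2 := by nlinarith [sq_nonneg δ]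
    have h := geom_sum_le_aux (f := u) (by linarith : (0:ℝ) < δ/2) hq hu t hgrow
    refine h.trans ?_
    have h1 : u t ≤ Cu' * δ ^ 2 / L := hT t ht
    have h2 : Cu' * δ ^ 2 / L ≤ δ^2 / 32 := by
      rw [div_le_div_iff₀ hL0 (by norm_num : (0:ℝ) < 32)]
      nlinarith [mul_nonneg (sub_nonneg.mpr hL32) (sq_nonneg δ)]
    rw [div_le_iff₀ (by linarith : (0:ℝ) < δ/2)]
    nlinarith [h1, h2]
  have sum_w_le : ∀ t, t ≤ T → (∀ s < t, (1 + δ/4)^2 * u s ≤ u (s+1)) →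
      ∑ s ∈ Finset.range t, |w s| ≤ 4 * C * Real.sqrt Cu' / (Real.sqrt m * Real.sqrt L) := by
    intro t ht hgrow
    have hgrow' : ∀ s < t, (1 + δ/4) * Real.sqrt (u s) ≤ Real.sqrt (u (s+1)) := by
      intro s hs
      have := Real.sqrt_le_sqrt (hgrow s hs)
      rwa [Real.sqrt_mul (sq_nonneg _), Real.sqrt_sq (by linarith : (0:ℝ) ≤ 1 + δ/4)]
        at this
    have h := geom_sum_le_aux (f := fun s => Real.sqrt (u s))
      (by linarith : (0:ℝ) < δ/4) le_rfl (fun s => Real.sqrt_nonneg _) t hgrow'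
    have hst : Real.sqrt (u t) ≤ Real.sqrt Cu' * δ / Real.sqrt L := by
      rw [← hsqrt_umax]; exact Real.sqrt_le_sqrt (hT t ht)
    have hsum : ∑ s ∈ Finset.range t, |w s| =
        C / Real.sqrt m * ∑ s ∈ Finset.range t, Real.sqrt (u s) := by
      rw [Finset.mul_sum]
      exact Finset.sum_congr rfl (fun s _ => by rw [hw_abs s]; ring)
    rw [hsum]
    have hsumle : ∑ s ∈ Finset.range t, Real.sqrt (u s) ≤
        4 * Real.sqrt Cu' / Real.sqrt L := by
      refine h.trans ?_
      rw [div_le_div_iff₀ (by linarith : (0:ℝ) < δ/4) hsL]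
      calc Real.sqrt (u t) * Real.sqrt L ≤ (Real.sqrt Cu' * δ / Real.sqrt L) * Real.sqrt L :=
            mul_le_mul_of_nonneg_right hst hsL.le
        _ = Real.sqrt Cu' * δ := by field_simp
        _ ≤ 4 * Real.sqrt Cu' * (δ/4) := le_of_eq (by ring)
    calc C / Real.sqrt m * ∑ s ∈ Finset.range t, Real.sqrt (u s)
        ≤ C / Real.sqrt m * (4 * Real.sqrt Cu' / Real.sqrt L) :=
          mul_le_mul_of_nonneg_left hsumle (div_nonneg hC.le (Real.sqrt_nonneg m))
      _ = 4 * C * Real.sqrt Cu' / (Real.sqrt m * Real.sqrt L) := by field_simp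
  -- key quantity: G bound
  have hGbound : c₄ / (Real.sqrt m * Real.sqrt L) ≤ L / (4 * Real.sqrt m) := by
    rw [div_le_div_iff₀ (mul_pos hsm hsL) (mul_pos (by norm_num : (0:ℝ) < 4) hsm)]
    have h1 : L ≤ L * Real.sqrt L := by nlinarith
    nlinarith [mul_le_mul_of_nonneg_right hL4c₄ hsm.le,
      mul_le_mul_of_nonneg_right h1 hsm.le]
  have hv0hi : v 0 ≤ 4 - L / Real.sqrt m := by
    have h := hδhi; rw [hδdef] at h; linarith
  -- the main induction
  have key : ∀ t, t ≤ T →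
      (∀ s < t, (1 + δ/4)^2 * u s ≤ u (s+1)) ∧
      v 0 - ∑ s ∈ Finset.range t, (4 * u s + 4 * |w s|) ≤ v t ∧
      v t ≤ v 0 + ∑ s ∈ Finset.range t, 4 * |w s| := by
    intro t
    induction t with
    | zero => intro _; refine ⟨fun s hs => absurd hs (Nat.not_lt_zero s), by simp, by simp⟩
    | succ n ih =>
      intro hn1
      have hnT : n ≤ T := by omega
      obtain ⟨hgrow, hlow, hhigh⟩ := ih hnT
      -- sum bounds at time n
      have hsu : ∑ s ∈ Finset.range n, u s ≤ δ / 16 := sum_u_le n hnT hgrow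
      have hsw : ∑ s ∈ Finset.range n, |w s| ≤
          4 * C * Real.sqrt Cu' / (Real.sqrt m * Real.sqrt L) := sum_w_le n hnT hgrow
      have hswL : 4 * (∑ s ∈ Finset.range n, |w s|) ≤ L / (4 * Real.sqrt m) := by
        have : 4 * (4 * C * Real.sqrt Cu' / (Real.sqrt m * Real.sqrt L)) =
            c₄ / (Real.sqrt m * Real.sqrt L) := by rw [hc₄def]; ring
        nlinarith
      have hswδ : 4 * (∑ s ∈ Finset.range n, |w s|) ≤ δ / 4 := by
        have h1 : L / (4 * Real.sqrt m) ≤ δ / 4 := by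
          rw [div_le_div_iff₀ (mul_pos (by norm_num : (0:ℝ) < 4) hsm)
            (by norm_num : (0:ℝ) < 4)]
          have := (div_le_iff₀ hsm).mp hδlo
          nlinarith
        linarith
      have hD : ∑ s ∈ Finset.range n, (4 * u s + 4 * |w s|) ≤ δ / 2 := by
        rw [Finset.sum_add_distrib, ← Finset.mul_sum, ← Finset.mul_sum]
        linarith
      -- bounds on v n
      have hvn_lo : 2 + δ / 2 ≤ v n := by
        have : v 0 = 2 + δ := by rw [hδdef]; ring
        linarith
      have hvn_hi : v n ≤ 4 - (3/4) * (L / Real.sqrt m) := by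
        have h2 : ∑ s ∈ Finset.range n, 4 * |w s| ≤ L / (4 * Real.sqrt m) := by
          rw [← Finset.mul_sum] at *; linarith
        have h3 : L / (4 * Real.sqrt m) = (1/4) * (L / Real.sqrt m) := by ring
        have h4 := hv0hi
        calc v n ≤ v 0 + ∑ s ∈ Finset.range n, 4 * |w s| := hhigh
          _ ≤ (4 - L / Real.sqrt m) + (1/4) * (L / Real.sqrt m) := by rw [← h3]; linarith
          _ = 4 - (3/4) * (L / Real.sqrt m) := by ring
      have hvn4 : v n ≤ 4 := by
        have : 0 < L / Real.sqrt m := div_pos hL0 hsm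
        linarith
      have hun : u n ≤ δ / 8 := hu_small n hnT
      have hwn : |w n| ≤ δ / 8 := hw_small n hnT
      -- the growth step at n
      have hgrown : (1 + δ/4)^2 * u n ≤ u (n+1) := by
        rw [hrecu n]
        have hA : 1 + δ/4 ≤ v n - 1 - u n - w n := by
          have h5 := le_abs_self (w n)
          linarith
        have hsq : (1 + δ/4)^2 ≤ (1 - v n + u n + w n)^2 := by
          have : (1 - v n + u n + w n)^2 = (v n - 1 - u n - w n)^2 := by ring
          rw [this]
          nlinarith [hδpos]
        exact mul_le_mul_of_nonneg_right hsq (hu n)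
      refine ⟨?_, ?_, ?_⟩
      · intro s hs
        rcases Nat.lt_succ_iff_lt_or_eq.mp hs with h | h
        · exact hgrow s h
        · rw [h]; exact hgrown
      · rw [Finset.sum_range_succ, hrecv n]
        have h1 : u n * (4 - v n) ≤ 4 * u n := by nlinarith [hu n, hv n]
        have h2 : 4 * w n ≤ 4 * |w n| := by
          have := le_abs_self (w n); linarith
        linarith
      · rw [Finset.sum_range_succ, hrecv n]
        have h1 : 0 ≤ u n * (4 - v n) := mul_nonneg (hu n) (by linarith)
        have h2 : -(4 * w n) ≤ 4 * |w n| := by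
          have := neg_abs_le (w n); linarith
        linarith
  -- conclude
  obtain ⟨hgrowT, hlowT, hhighT⟩ := key T le_rfl
  have hswT : ∑ s ∈ Finset.range T, |w s| ≤
      4 * C * Real.sqrt Cu' / (Real.sqrt m * Real.sqrt L) := sum_w_le T le_rfl hgrowT
  have hGT : ∑ s ∈ Finset.range T, 4 * |w s| ≤ c₄ / (Real.sqrt m * Real.sqrt L) := by
    rw [← Finset.mul_sum]
    have : 4 * (4 * C * Real.sqrt Cu' / (Real.sqrt m * Real.sqrt L)) =
        c₄ / (Real.sqrt m * Real.sqrt L) := by rw [hc₄def]; ring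
    linarith
  have hsplit : Real.sqrt (m * L) = Real.sqrt m * Real.sqrt L := Real.sqrt_mul hm0.le L
  constructor
  · rw [hsplit]
    linarith
  · have hGL : ∑ s ∈ Finset.range T, 4 * |w s| ≤ L / (4 * Real.sqrt m) :=
      le_trans hGT hGbound
    have hpos : 0 < L / Real.sqrt m := div_pos hL0 hsm
    have : v T ≤ 4 - (3/4) * (L / Real.sqrt m) := by
      calc v T ≤ v 0 + ∑ s ∈ Finset.range T, 4 * |w s| := hhighT
        _ ≤ (4 - L / Real.sqrt m) + (1/4) * (L / Real.sqrt m) := by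
            have : L / (4 * Real.sqrt m) = (1/4) * (L / Real.sqrt m) := by ring
            rw [← this]; linarith
        _ = 4 - (3/4) * (L / Real.sqrt m) := by ring
    have hgoal : (1/2 : ℝ) * L / Real.sqrt m = (1/2) * (L / Real.sqrt m) := by ring
    linarith [this, hpos]
end

section
/- (One-step decrease of the kernel.) If at some time t the system satisfies v(t) < 4 and u(t) > 16·C²/(m·(4 − v(t))²), then v(t+1) < v(t). -/
/-! The kernel changes by `-(u (4 - v) + 4 w)`. Since `(4 w)² = 16 C² u / m`, the threshold on `u`
is exactly the condition `(4 w)² < (u (4 - v))²`, so the coupling term `4 w` cannot outweigh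
`u (4 - v) > 0`, whatever its sign. -/

lemma abs_four_mul_lt_of_threshold_lt {C m u w a : ℝ} (hm : 0 < m) (ha : 0 < a)
    (hw : w ^ 2 = C ^ 2 * u / m) (hu : 16 * C ^ 2 / (m * a ^ 2) < u) :
    |4 * w| < u * a := by
  have hu_pos : 0 < u := lt_of_le_of_lt (by positivity) hu
  refine abs_lt_of_sq_lt_sq ?_ (by positivity)
  calc (4 * w) ^ 2 = 16 * C ^ 2 / (m * a ^ 2) * u * a ^ 2 := by
        rw [mul_pow, hw]; field_simp; ring
    _ < u * u * a ^ 2 := by gcongr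
    _ = (u * a) ^ 2 := by ring

theorem nqm_catapult_one_step_kernel_decrease_general
    (C m : ℝ) (hm : 1 < m)
    (u v w : ℕ → ℝ)
    (hw : ∀ t, (w t) ^ 2 = C ^ 2 * u t / m)
    (hve : ∀ t, v (t+1) = v t - u t * (4 - v t) - 4 * w t)
    (t : ℕ) (h4 : v t < 4)
    (hut : 16 * C ^ 2 / (m * (4 - v t) ^ 2) < u t) :
    v (t+1) < v t := by
  have hcoupling : |4 * w t| < u t * (4 - v t) :=
    abs_four_mul_lt_of_threshold_lt (by linarith) (sub_pos.2 h4) (hw t) hut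
  rw [hve t]
  linarith [neg_abs_le (4 * w t)]

/-- **One-step decrease of the kernel.**  If at some time `t` the catapult
system satisfies `v t < 4` and `u t > 16·C²/(m·(4 − v t)²)`, then
`v (t+1) < v t`. -/
theorem nqm_catapult_one_step_kernel_decrease
    (C m : ℝ) (hC : 0 < C) (hm : 1 < m)
    (u v w : ℕ → ℝ)
    (hu : ∀ t, 0 ≤ u t)
    (hv : ∀ t, 0 ≤ v t)
    (hw : ∀ t, (w t) ^ 2 = C ^ 2 * u t / m)
    (hue : ∀ t, u (t+1) = (1 - v t + u t + w t) ^ 2 * u t)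
    (hve : ∀ t, v (t+1) = v t - u t * (4 - v t) - 4 * w t)
    (t : ℕ) (h4 : v t < 4)
    (hut : 16 * C ^ 2 / (m * (4 - v t) ^ 2) < u t) :
    v (t+1) < v t :=
  nqm_catapult_one_step_kernel_decrease_general C m hm u v w hw hve t h4 hut
end

section
/- (Stability of the zero-loss equilibria.) For every v* with 0 < v* < 2, the point (0, v*) is a fixed point of Φ and is Lyapunov stable: for every ε > 0 there exists r > 0 such that every trajectory (u(t), v(t)), t ≥ 0, with (u(t+1), v(t+1)) = Φ(u(t), v(t)), 0 ≤ u(0) ≤ r and |v(0) − v*| ≤ r, satisfies 0 ≤ u(t) ≤ ε and |v(t) − v*| ≤ ε for all t ≥ 0. (In the original variables: the stable steady-state equilibria have zero loss and tangent kernel λ with η·λ strictly between 0 and 2.) -/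
set_option maxHeartbeats 2000000 in
/-- **Stability of the zero-loss equilibria.**  For every `0 < v* < 2`, the
point `(0, v*)` is a fixed point of the catapult-dynamics map `Φ` and is
Lyapunov stable: for every `ε > 0` there is `r > 0` such that every trajectory
of `Φ` starting with `0 ≤ u 0 ≤ r` and `|v 0 − v*| ≤ r` satisfies
`0 ≤ u t ≤ ε` and `|v t − v*| ≤ ε` for all `t`. -/
theorem nqm_zero_loss_equilibria_stable
    (C m : ℝ) (hC : 0 < C) (hm : 0 < m)
    (w : ℝ → ℝ) (hw : ∀ s : ℝ, 0 ≤ s → (w s) ^ 2 = C ^ 2 * s / m)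
    (Φ : ℝ × ℝ → ℝ × ℝ)
    (hΦ : ∀ p : ℝ × ℝ, 0 ≤ p.1 →
      Φ p = ((1 - p.2 + p.1 + w p.1) ^ 2 * p.1,
             p.2 - p.1 * (4 - p.2) - 4 * w p.1))
    (vstar : ℝ) (h0 : 0 < vstar) (h2 : vstar < 2) :
    Φ (0, vstar) = (0, vstar) ∧
      ∀ ε : ℝ, 0 < ε → ∃ r : ℝ, 0 < r ∧
        ∀ u v : ℕ → ℝ,
          (∀ t : ℕ, (u (t+1), v (t+1)) = Φ (u t, v t)) →
          0 ≤ u 0 → u 0 ≤ r → |v 0 - vstar| ≤ r →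
          ∀ t : ℕ, 0 ≤ u t ∧ u t ≤ ε ∧ |v t - vstar| ≤ ε := by
  have hw0 : w 0 = 0 := by
    have h := hw 0 le_rfl
    have : (w 0) ^ 2 = 0 := by rw [h]; ring
    exact pow_eq_zero_iff (by norm_num) |>.mp this
  -- magnitude of w
  set d : ℝ := C / Real.sqrt m with hd_def
  have hsm : 0 < Real.sqrt m := Real.sqrt_pos.mpr hm
  have hd : 0 < d := div_pos hC hsm
  have habs : ∀ s : ℝ, 0 ≤ s → |w s| = d * Real.sqrt s := by
    intro s hs
    have h1 : (w s) ^ 2 = (d * Real.sqrt s) ^ 2 := by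
      rw [hw s hs, mul_pow, Real.sq_sqrt hs, hd_def, div_pow, Real.sq_sqrt hm.le]
      ring
    have h2 : |w s| = |d * Real.sqrt s| := by
      rw [← Real.sqrt_sq_eq_abs, ← Real.sqrt_sq_eq_abs (d * Real.sqrt s), h1]
    rw [h2, abs_of_nonneg (by positivity)]
  constructor
  · rw [hΦ (0, vstar) le_rfl]
    simp [hw0]
  intro ε hε
  set q : ℝ := |1 - vstar| with hq_def
  have hq0 : 0 ≤ q := abs_nonneg _
  have hq1 : q < 1 := by
    rw [hq_def, abs_lt]; constructor <;> linarith
  set a : ℝ := (1 - q) / 4 with ha_def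
  have ha : 0 < a := by rw [ha_def]; linarith
  have ha4 : a ≤ 1 / 4 := by rw [ha_def]; linarith
  set ρ : ℝ := 1 - a with hρ_def
  have hρ0 : 0 < ρ := by rw [hρ_def]; linarith
  have hρ1 : ρ < 1 := by rw [hρ_def]; linarith
  set K : ℝ := 7 + 4 * d with hK_def
  have hK : 0 < K := by positivity
  set δ : ℝ := min 1 ((a / (1 + d)) ^ 2) with hδ_def
  have hδ0 : 0 < δ := lt_min one_pos (by positivity)
  have hδ1 : δ ≤ 1 := min_le_left _ _
  have hδa : (1 + d) * Real.sqrt δ ≤ a := by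
    have h1 : Real.sqrt δ ≤ a / (1 + d) := by
      calc Real.sqrt δ ≤ Real.sqrt ((a / (1 + d)) ^ 2) :=
            Real.sqrt_le_sqrt (min_le_right _ _)
        _ = a / (1 + d) := by
            rw [Real.sqrt_sq_eq_abs, abs_of_nonneg (by positivity)]
    calc (1 + d) * Real.sqrt δ ≤ (1 + d) * (a / (1 + d)) := by
          apply mul_le_mul_of_nonneg_left h1 (by positivity)
      _ = a := by field_simp
  set e : ℝ := min a ε with he_def
  have he : 0 < e := lt_min ha hε
  have hea : e ≤ a := min_le_left _ _
  have heε : e ≤ ε := min_le_right _ _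
  refine ⟨min (min δ ε) (min (e / 2) ((a * e / (2 * K)) ^ 2)), by positivity, ?_⟩
  set r : ℝ := min (min δ ε) (min (e / 2) ((a * e / (2 * K)) ^ 2)) with hr_def
  have hr0 : 0 < r := by positivity
  have hrδ : r ≤ δ := le_trans (min_le_left _ _) (min_le_left _ _)
  have hrε : r ≤ ε := le_trans (min_le_left _ _) (min_le_right _ _)
  have hre : r ≤ e / 2 := le_trans (min_le_right _ _) (min_le_left _ _)
  have hsr : Real.sqrt r ≤ a * e / (2 * K) := by
    calc Real.sqrt r ≤ Real.sqrt ((a * e / (2 * K)) ^ 2) :=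
          Real.sqrt_le_sqrt (le_trans (min_le_right _ _) (min_le_right _ _))
      _ = a * e / (2 * K) := by
          rw [Real.sqrt_sq_eq_abs, abs_of_nonneg (by positivity)]
  intro u v htraj hu0 hu0r hv0r
  have hsu0 : Real.sqrt (u 0) ≤ Real.sqrt r := Real.sqrt_le_sqrt hu0r
  -- the cumulative drift bound B
  have hB : K * Real.sqrt (u 0) / a ≤ e / 2 := by
    have h1 : K * Real.sqrt (u 0) ≤ K * (a * e / (2 * K)) := by
      apply mul_le_mul_of_nonneg_left (le_trans hsu0 hsr) hK.le
    have h2 : K * (a * e / (2 * K)) = a * e / 2 := by field_simp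
    rw [div_le_iff₀ ha]
    calc K * Real.sqrt (u 0) ≤ a * e / 2 := by rw [← h2]; exact h1
      _ = e / 2 * a := by ring
  have hB0 : 0 ≤ K * Real.sqrt (u 0) / a := by positivity
  -- Main induction
  have main : ∀ t : ℕ, 0 ≤ u t ∧ u t ≤ r ∧
      Real.sqrt (u t) ≤ ρ ^ t * Real.sqrt (u 0) ∧
      |v t - v 0| ≤ (K * Real.sqrt (u 0) / a) * (1 - ρ ^ t) := by
    intro t
    induction t with
    | zero => refine ⟨hu0, hu0r, by simp, by simp⟩
    | succ t ih =>
      obtain ⟨h1, h2, h3, h4⟩ := ih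
      have hρt0 : (0:ℝ) ≤ ρ ^ t := by positivity
      have hρt1 : ρ ^ t ≤ 1 := pow_le_one₀ hρ0.le hρ1.le
      -- bound on |v t - vstar|
      have hvt : |v t - vstar| ≤ e := by
        calc |v t - vstar| ≤ |v t - v 0| + |v 0 - vstar| := abs_sub_le _ _ _
          _ ≤ (K * Real.sqrt (u 0) / a) * (1 - ρ ^ t) + r := by
              apply add_le_add h4 hv0r
          _ ≤ (K * Real.sqrt (u 0) / a) * 1 + e / 2 := by
              apply add_le_add (mul_le_mul_of_nonneg_left (by linarith) hB0) hre
          _ ≤ e / 2 + e / 2 := by rw [mul_one]; linarith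
          _ = e := by ring
      have hvta : |v t - vstar| ≤ a := le_trans hvt hea
      -- u t ≤ δ ≤ 1
      have hutδ : u t ≤ δ := le_trans h2 hrδ
      have hut1 : u t ≤ 1 := le_trans hutδ hδ1
      have hutsq : u t ≤ Real.sqrt (u t) := by
        rw [Real.le_sqrt h1 h1]
        nlinarith
      have hsδ : Real.sqrt (u t) ≤ Real.sqrt δ := Real.sqrt_le_sqrt hutδ
      have hwt : |w (u t)| = d * Real.sqrt (u t) := habs _ h1
      -- the contraction factor
      have hfac : |1 - v t + u t + w (u t)| ≤ ρ := by
        have h1v : |1 - v t| ≤ q + a := by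
          calc |1 - v t| ≤ |1 - vstar| + |vstar - v t| := abs_sub_le 1 vstar (v t)
            _ = q + |v t - vstar| := by rw [abs_sub_comm vstar, hq_def]
            _ ≤ q + a := add_le_add le_rfl hvta
        have hw' : w (u t) ≤ d * Real.sqrt (u t) := le_trans (le_abs_self _) hwt.le
        have hw'' : -(d * Real.sqrt (u t)) ≤ w (u t) := by
          rw [← hwt]; exact neg_abs_le _
        have hsum : u t + |w (u t)| ≤ a := by
          calc u t + |w (u t)| ≤ Real.sqrt (u t) + d * Real.sqrt (u t) := by
                rw [hwt]; exact add_le_add hutsq le_rfl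
            _ = (1 + d) * Real.sqrt (u t) := by ring
            _ ≤ (1 + d) * Real.sqrt δ := by
                apply mul_le_mul_of_nonneg_left hsδ (by positivity)
            _ ≤ a := hδa
        calc |1 - v t + u t + w (u t)| ≤ |1 - v t| + |u t + w (u t)| := by
              rw [add_assoc]; exact abs_add_le _ _
          _ ≤ (q + a) + (u t + |w (u t)|) := by
              apply add_le_add h1v
              calc |u t + w (u t)| ≤ |u t| + |w (u t)| := abs_add_le _ _
                _ = u t + |w (u t)| := by rw [abs_of_nonneg h1]
          _ ≤ (q + a) + a := add_le_add le_rfl hsum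
          _ ≤ ρ := by rw [hρ_def, ha_def]; linarith
      -- extract step equations
      have hstep : (u (t+1), v (t+1)) =
          ((1 - v t + u t + w (u t)) ^ 2 * u t,
            v t - u t * (4 - v t) - 4 * w (u t)) :=
        (htraj t).trans (hΦ (u t, v t) h1)
      rw [Prod.mk.injEq] at hstep
      obtain ⟨hu', hv'⟩ := hstep
      -- nonnegativity
      have hpos : 0 ≤ u (t+1) := by rw [hu']; positivity
      -- contraction of sqrt u
      have hsqrt : Real.sqrt (u (t+1)) ≤ ρ ^ (t+1) * Real.sqrt (u 0) := by
        rw [hu', Real.sqrt_mul (sq_nonneg _), Real.sqrt_sq_eq_abs]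
        calc |1 - v t + u t + w (u t)| * Real.sqrt (u t)
            ≤ ρ * (ρ ^ t * Real.sqrt (u 0)) := by
              apply mul_le_mul hfac h3 (Real.sqrt_nonneg _) hρ0.le
          _ = ρ ^ (t+1) * Real.sqrt (u 0) := by rw [pow_succ]; ring
      -- u (t+1) ≤ r
      have hur : u (t+1) ≤ r := by
        have hs : Real.sqrt (u (t+1)) ≤ Real.sqrt r := by
          calc Real.sqrt (u (t+1)) ≤ ρ ^ (t+1) * Real.sqrt (u 0) := hsqrt
            _ ≤ 1 * Real.sqrt (u 0) := by
                apply mul_le_mul_of_nonneg_right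
                  (pow_le_one₀ hρ0.le hρ1.le) (Real.sqrt_nonneg _)
            _ = Real.sqrt (u 0) := one_mul _
            _ ≤ Real.sqrt r := hsu0
        exact (Real.sqrt_le_sqrt_iff hr0.le).mp hs
      -- drift bound for v
      have hdrift : |v (t+1) - v t| ≤ K * (ρ ^ t * Real.sqrt (u 0)) := by
        have h4v : |4 - v t| ≤ 7 := by
          have : |v t| ≤ |v t - vstar| + |vstar| := by
            calc |v t| = |(v t - vstar) + vstar| := by ring_nf
              _ ≤ |v t - vstar| + |vstar| := abs_add_le _ _
          have hvs : |vstar| ≤ 2 := by rw [abs_of_pos h0]; linarith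
          have hvb : |v t| ≤ 3 := by
            have := le_trans hvta ha4
            linarith [le_trans hvt (le_trans hea ha4)]
          calc |4 - v t| ≤ |(4:ℝ)| + |v t| := abs_sub _ _
            _ ≤ 4 + 3 := by
                apply add_le_add _ hvb
                norm_num
            _ = 7 := by norm_num
        calc |v (t+1) - v t| = |(-(u t * (4 - v t))) + (-(4 * w (u t)))| := by
              rw [hv']; ring_nf
          _ ≤ |(-(u t * (4 - v t)))| + |(-(4 * w (u t)))| := abs_add_le _ _
          _ = u t * |4 - v t| + 4 * |w (u t)| := by
              rw [abs_neg, abs_neg, abs_mul, abs_mul, abs_of_nonneg h1]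
              norm_num
          _ ≤ Real.sqrt (u t) * 7 + 4 * (d * Real.sqrt (u t)) := by
              apply add_le_add
              · calc u t * |4 - v t| ≤ u t * 7 :=
                    mul_le_mul_of_nonneg_left h4v h1
                  _ ≤ Real.sqrt (u t) * 7 := by
                    apply mul_le_mul_of_nonneg_right hutsq; norm_num
              · rw [hwt]
          _ = K * Real.sqrt (u t) := by rw [hK_def]; ring
          _ ≤ K * (ρ ^ t * Real.sqrt (u 0)) :=
              mul_le_mul_of_nonneg_left h3 hK.le
      -- cumulative drift
      have hcum : |v (t+1) - v 0| ≤ (K * Real.sqrt (u 0) / a) * (1 - ρ ^ (t+1)) := by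
        calc |v (t+1) - v 0| ≤ |v (t+1) - v t| + |v t - v 0| := abs_sub_le _ _ _
          _ ≤ K * (ρ ^ t * Real.sqrt (u 0))
              + (K * Real.sqrt (u 0) / a) * (1 - ρ ^ t) := add_le_add hdrift h4
          _ = (K * Real.sqrt (u 0) / a) * (1 - ρ ^ (t+1)) := by
              have hρa : a = 1 - ρ := by rw [hρ_def]; ring
              have hane : a ≠ 0 := ne_of_gt ha
              rw [hρa] at hane ⊢
              field_simp
              ring
      exact ⟨hpos, hur, hsqrt, hcum⟩
  -- conclude
  intro t
  obtain ⟨h1, h2, h3, h4⟩ := main t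
  refine ⟨h1, le_trans h2 hrε, ?_⟩
  have hρt1 : ρ ^ t ≤ 1 := pow_le_one₀ hρ0.le hρ1.le
  have hρt0 : (0:ℝ) ≤ ρ ^ t := by positivity
  calc |v t - vstar| ≤ |v t - v 0| + |v 0 - vstar| := abs_sub_le _ _ _
    _ ≤ (K * Real.sqrt (u 0) / a) * 1 + e / 2 := by
        apply add_le_add _ (le_trans hv0r hre)
        exact le_trans h4 (mul_le_mul_of_nonneg_left (by linarith) hB0)
    _ ≤ e / 2 + e / 2 := by rw [mul_one]; linarith
    _ ≤ ε := by linarith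
end

section
/- The vectors p₁ and p₂ are eigenvectors of the tangent kernel matrix K: K·p₁ = λ₁·p₁ and K·p₂ = λ₂·p₂, where λ₁ = ((1/m)·Σ_{k=1}^m (u_k² + v_k²)·1{u_k > 0})·(Σ_{j=1}^n x_j²·1{x_j ≥ 0}) and λ₂ = ((1/m)·Σ_{k=1}^m (u_k² + v_k²)·1{u_k < 0})·(Σ_{j=1}^n x_j²·1{x_j < 0}). -/
lemma nqm_key1 (a xi xj uk : ℝ) (huk : uk ≠ 0) :
    a * xi * xj * (if 0 ≤ uk * xi then 1 else 0) * (if 0 ≤ uk * xj then 1 else 0) *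
      (xj * (if 0 ≤ xj then 1 else 0))
    = a * (if 0 < uk then 1 else 0) * (xj ^ 2 * (if 0 ≤ xj then 1 else 0)) *
      (xi * (if 0 ≤ xi then 1 else 0)) := by
  rcases huk.lt_or_gt with h | h
  · rcases lt_trichotomy xj 0 with hj | hj | hj
    · simp [not_le.mpr hj, not_lt.mpr h.le]
    · simp [hj]
    · have : uk * xj < 0 := mul_neg_of_neg_of_pos h hj
      simp [not_le.mpr this, not_lt.mpr h.le]
  · rcases lt_trichotomy xj 0 with hj | hj | hj
    · simp [not_le.mpr hj]
    · simp [hj]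
    · have h1 : (0:ℝ) ≤ uk * xj := le_of_lt (mul_pos h hj)
      have h2 : (0 ≤ uk * xi) ↔ (0 ≤ xi) := by
        constructor
        · intro hx; nlinarith
        · intro hx; positivity
      simp only [if_pos h1, if_pos h, if_pos hj.le, h2]
      by_cases hx : 0 ≤ xi
      · simp [hx]; ring
      · simp [hx]
  
lemma nqm_key2 (a xi xj uk : ℝ) (huk : uk ≠ 0) :
    a * xi * xj * (if 0 ≤ uk * xi then 1 else 0) * (if 0 ≤ uk * xj then 1 else 0) *
      (xj * (if xj < 0 then 1 else 0))
    = a * (if uk < 0 then 1 else 0) * (xj ^ 2 * (if xj < 0 then 1 else 0)) *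
      (xi * (if xi < 0 then 1 else 0)) := by
  rcases huk.lt_or_gt with h | h
  · rcases lt_trichotomy xj 0 with hj | hj | hj
    · have h1 : (0:ℝ) ≤ uk * xj := le_of_lt (mul_pos_of_neg_of_neg h hj)
      have h2 : (0 ≤ uk * xi) ↔ (xi ≤ 0) := by
        constructor
        · intro hx; nlinarith
        · intro hx; nlinarith
      simp only [if_pos h1, if_pos h, if_pos hj, h2]
      rcases lt_trichotomy xi 0 with hx | hx | hx
      · simp [hx, hx.le]; ring
      · simp [hx]
      · simp [not_le.mpr hx, not_lt.mpr hx.le]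
    · simp [hj]
    · simp [not_lt.mpr hj.le, not_lt.mpr h.le]
  · rcases lt_trichotomy xj 0 with hj | hj | hj
    · have : uk * xj < 0 := mul_neg_of_pos_of_neg h hj
      simp [not_le.mpr this, not_lt.mpr h.le]
    · simp [hj]
    · simp [not_lt.mpr hj.le, not_lt.mpr h.le]

/-- **Eigenvectors of the NQM tangent kernel with unidimensional inputs.**
`p₁` and `p₂` are eigenvectors of `K`, with eigenvalues
`λ₁ = ((1/m)·Σₖ (uₖ² + vₖ²)·1{uₖ > 0})·(Σⱼ xⱼ²·1{xⱼ ≥ 0})` and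
`λ₂ = ((1/m)·Σₖ (uₖ² + vₖ²)·1{uₖ < 0})·(Σⱼ xⱼ²·1{xⱼ < 0})`. -/
theorem nqm_tangent_kernel_eigenvectors
    (n m : ℕ) (hn : 1 ≤ n) (hm : 1 ≤ m)
    (x : Fin n → ℝ) (u v : Fin m → ℝ) (hu : ∀ k, u k ≠ 0)
    (K : Matrix (Fin n) (Fin n) ℝ)
    (hK : ∀ i j, K i j = (1 / (m : ℝ)) *
      ∑ k, (u k ^ 2 + v k ^ 2) * x i * x j *
        (if 0 ≤ u k * x i then 1 else 0) * (if 0 ≤ u k * x j then 1 else 0))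
    (p₁ p₂ : Fin n → ℝ)
    (hp₁ : ∀ i, p₁ i = x i * (if 0 ≤ x i then 1 else 0))
    (hp₂ : ∀ i, p₂ i = x i * (if x i < 0 then 1 else 0)) :
    K.mulVec p₁ =
      (((1 / (m : ℝ)) * ∑ k, (u k ^ 2 + v k ^ 2) * (if 0 < u k then 1 else 0)) *
        (∑ j, x j ^ 2 * (if 0 ≤ x j then 1 else 0))) • p₁ ∧
    K.mulVec p₂ =
      (((1 / (m : ℝ)) * ∑ k, (u k ^ 2 + v k ^ 2) * (if u k < 0 then 1 else 0)) *
        (∑ j, x j ^ 2 * (if x j < 0 then 1 else 0))) • p₂ := by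
  constructor
  · funext i
    simp only [Matrix.mulVec, dotProduct, Pi.smul_apply, smul_eq_mul, hK, hp₁]
    calc ∑ j, (1 / (m : ℝ) * ∑ k, (u k ^ 2 + v k ^ 2) * x i * x j *
            (if 0 ≤ u k * x i then 1 else 0) * (if 0 ≤ u k * x j then 1 else 0)) *
            (x j * (if 0 ≤ x j then 1 else 0))
        = 1 / (m : ℝ) * ∑ j, ∑ k, ((u k ^ 2 + v k ^ 2) * x i * x j *
            (if 0 ≤ u k * x i then 1 else 0) * (if 0 ≤ u k * x j then 1 else 0)) *
            (x j * (if 0 ≤ x j then 1 else 0)) := by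
          rw [Finset.mul_sum]
          refine Finset.sum_congr rfl fun j _ => ?_
          rw [mul_assoc, Finset.sum_mul]
      _ = 1 / (m : ℝ) * ∑ k, ∑ j, ((u k ^ 2 + v k ^ 2) * (if 0 < u k then 1 else 0)) *
            (x j ^ 2 * (if 0 ≤ x j then 1 else 0)) * (x i * (if 0 ≤ x i then 1 else 0)) := by
          rw [Finset.sum_comm]
          congr 1
          refine Finset.sum_congr rfl fun k _ => Finset.sum_congr rfl fun j _ => ?_
          have := nqm_key1 (u k ^ 2 + v k ^ 2) (x i) (x j) (u k) (hu k)
          linarith [this]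
      _ = (1 / (m : ℝ) * ∑ k, (u k ^ 2 + v k ^ 2) * (if 0 < u k then 1 else 0)) *
            (∑ j, x j ^ 2 * (if 0 ≤ x j then 1 else 0)) * (x i * (if 0 ≤ x i then 1 else 0)) := by
          simp only [← Finset.sum_mul, ← Finset.mul_sum]
          ring
  · funext i
    simp only [Matrix.mulVec, dotProduct, Pi.smul_apply, smul_eq_mul, hK, hp₂]
    calc ∑ j, (1 / (m : ℝ) * ∑ k, (u k ^ 2 + v k ^ 2) * x i * x j *
            (if 0 ≤ u k * x i then 1 else 0) * (if 0 ≤ u k * x j then 1 else 0)) *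
            (x j * (if x j < 0 then 1 else 0))
        = 1 / (m : ℝ) * ∑ j, ∑ k, ((u k ^ 2 + v k ^ 2) * x i * x j *
            (if 0 ≤ u k * x i then 1 else 0) * (if 0 ≤ u k * x j then 1 else 0)) *
            (x j * (if x j < 0 then 1 else 0)) := by
          rw [Finset.mul_sum]
          refine Finset.sum_congr rfl fun j _ => ?_
          rw [mul_assoc, Finset.sum_mul]
      _ = 1 / (m : ℝ) * ∑ k, ∑ j, ((u k ^ 2 + v k ^ 2) * (if u k < 0 then 1 else 0)) *
            (x j ^ 2 * (if x j < 0 then 1 else 0)) * (x i * (if x i < 0 then 1 else 0)) := by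
          rw [Finset.sum_comm]
          congr 1
          refine Finset.sum_congr rfl fun k _ => Finset.sum_congr rfl fun j _ => ?_
          have := nqm_key2 (u k ^ 2 + v k ^ 2) (x i) (x j) (u k) (hu k)
          linarith [this]
      _ = (1 / (m : ℝ) * ∑ k, (u k ^ 2 + v k ^ 2) * (if u k < 0 then 1 else 0)) *
            (∑ j, x j ^ 2 * (if x j < 0 then 1 else 0)) * (x i * (if x i < 0 then 1 else 0)) := by
          simp only [← Finset.sum_mul, ← Finset.mul_sum]
          ring
end

section
/- The tangent kernel matrix admits the rank-two decomposition K = A₊·p₁p₁ᵀ + A₋·p₂p₂ᵀ, where A₊ = (1/m)·Σ_{k=1}^m (u_k² + v_k²)·1{u_k > 0} and A₋ = (1/m)·Σ_{k=1}^m (u_k² + v_k²)·1{u_k < 0}; in particular, the rank of K is at most 2. -/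
lemma term_eq (a xi xj uk : ℝ) (h : uk ≠ 0) :
    (a * xi * xj * (if 0 ≤ uk * xi then (1:ℝ) else 0)) * (if 0 ≤ uk * xj then (1:ℝ) else 0)
    = a * (if 0 < uk then (1:ℝ) else 0) *
        ((xi * (if 0 ≤ xi then (1:ℝ) else 0)) * (xj * (if 0 ≤ xj then (1:ℝ) else 0)))
      + a * (if uk < 0 then (1:ℝ) else 0) *
        ((xi * (if xi < 0 then (1:ℝ) else 0)) * (xj * (if xj < 0 then (1:ℝ) else 0))) := by
  have key : (a * xi * xj * (if 0 ≤ uk * xi then (1:ℝ) else 0)) * (if 0 ≤ uk * xj then (1:ℝ) else 0)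
      = a * ((xi * (if 0 ≤ uk * xi then (1:ℝ) else 0)) * (xj * (if 0 ≤ uk * xj then (1:ℝ) else 0))) := by
    ring
  rcases h.lt_or_gt with hk | hk
  · have e1 : ∀ y : ℝ, y * (if 0 ≤ uk * y then (1:ℝ) else 0) = y * (if y < 0 then 1 else 0) := by
      intro y
      rcases lt_trichotomy y 0 with hy | hy | hy
      · rw [if_pos (by nlinarith), if_pos hy]
      · subst hy; ring
      · rw [if_neg (by nlinarith), if_neg (by linarith)]
    rw [key, e1, e1, if_neg (by linarith : ¬ (0:ℝ) < uk), if_pos hk]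
    ring
  · have e1 : ∀ y : ℝ, y * (if 0 ≤ uk * y then (1:ℝ) else 0) = y * (if 0 ≤ y then 1 else 0) := by
      intro y
      rcases le_or_gt 0 y with hy | hy
      · rw [if_pos (by positivity), if_pos hy]
      · rw [if_neg (by nlinarith), if_neg (by linarith)]
    rw [key, e1, e1, if_pos hk, if_neg (by linarith : ¬ uk < 0)]
    ring

lemma vecMulVec_rank_le_one {n : ℕ} (w v : Fin n → ℝ) :
    (Matrix.vecMulVec w v).rank ≤ 1 := by
  have hrange : LinearMap.range (Matrix.vecMulVec w v).mulVecLin ≤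
      Submodule.span ℝ {w} := by
    rintro y ⟨c, rfl⟩
    have : (Matrix.vecMulVec w v).mulVecLin c = (dotProduct v c) • w := by
      funext i
      simp [Matrix.mulVec, Matrix.vecMulVec, dotProduct, Finset.mul_sum, mul_assoc,
        mul_comm, mul_left_comm]
    rw [this]
    exact Submodule.smul_mem _ _ (Submodule.mem_span_singleton_self w)
  calc (Matrix.vecMulVec w v).rank
      ≤ Module.finrank ℝ (Submodule.span ℝ {w}) :=
        Submodule.finrank_mono hrange
    _ ≤ 1 := by simpa using finrank_span_le_card ({w} : Set (Fin n → ℝ))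

lemma matrix_rank_add_le {n : ℕ} (A B : Matrix (Fin n) (Fin n) ℝ) :
    (A + B).rank ≤ A.rank + B.rank := by
  have h : LinearMap.range (A + B).mulVecLin ≤
      LinearMap.range A.mulVecLin ⊔ LinearMap.range B.mulVecLin := by
    rintro y ⟨c, rfl⟩
    rw [Matrix.mulVecLin_add]
    exact Submodule.add_mem_sup ⟨c, rfl⟩ ⟨c, rfl⟩
  calc (A + B).rank ≤ Module.finrank ℝ
        (LinearMap.range A.mulVecLin ⊔ LinearMap.range B.mulVecLin : Submodule ℝ (Fin n → ℝ)) :=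
        Submodule.finrank_mono h
    _ ≤ A.rank + B.rank := Submodule.finrank_add_le_finrank_add_finrank _ _

/-- **Rank-two decomposition of the NQM tangent kernel with unidimensional
inputs:** `K = A₊·p₁p₁ᵀ + A₋·p₂p₂ᵀ` with
`A₊ = (1/m)·Σₖ (uₖ² + vₖ²)·1{uₖ > 0}` and
`A₋ = (1/m)·Σₖ (uₖ² + vₖ²)·1{uₖ < 0}`; in particular `rank K ≤ 2`. -/
theorem nqm_tangent_kernel_rank_two
    (n m : ℕ) (hn : 1 ≤ n) (hm : 1 ≤ m)
    (x : Fin n → ℝ) (u v : Fin m → ℝ) (hu : ∀ k, u k ≠ 0)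
    (K : Matrix (Fin n) (Fin n) ℝ)
    (hK : ∀ i j, K i j = (1 / (m : ℝ)) *
      ∑ k, (u k ^ 2 + v k ^ 2) * x i * x j *
        (if 0 ≤ u k * x i then 1 else 0) * (if 0 ≤ u k * x j then 1 else 0))
    (p₁ p₂ : Fin n → ℝ)
    (hp₁ : ∀ i, p₁ i = x i * (if 0 ≤ x i then 1 else 0))
    (hp₂ : ∀ i, p₂ i = x i * (if x i < 0 then 1 else 0)) :
    K = ((1 / (m : ℝ)) * ∑ k, (u k ^ 2 + v k ^ 2) * (if 0 < u k then 1 else 0)) •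
          Matrix.vecMulVec p₁ p₁
        + ((1 / (m : ℝ)) * ∑ k, (u k ^ 2 + v k ^ 2) * (if u k < 0 then 1 else 0)) •
          Matrix.vecMulVec p₂ p₂
      ∧ K.rank ≤ 2 := by
  have hdecomp : K = ((1 / (m : ℝ)) * ∑ k, (u k ^ 2 + v k ^ 2) * (if 0 < u k then 1 else 0)) •
          Matrix.vecMulVec p₁ p₁
        + ((1 / (m : ℝ)) * ∑ k, (u k ^ 2 + v k ^ 2) * (if u k < 0 then 1 else 0)) •
          Matrix.vecMulVec p₂ p₂ := by
    ext i j
    rw [hK]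
    simp only [Matrix.add_apply, Matrix.smul_apply, Matrix.vecMulVec_apply, smul_eq_mul]
    rw [mul_assoc, mul_assoc, ← mul_add]
    congr 1
    rw [Finset.sum_mul, Finset.sum_mul, ← Finset.sum_add_distrib]
    apply Finset.sum_congr rfl
    intro k _
    rw [hp₁ i, hp₁ j, hp₂ i, hp₂ j]
    exact term_eq _ _ _ _ (hu k)
  refine ⟨hdecomp, ?_⟩
  rw [hdecomp]
  have e1 : ∀ (c : ℝ) (p : Fin n → ℝ), c • Matrix.vecMulVec p p =
      Matrix.vecMulVec (c • p) p := by
    intro c p; ext i j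
    simp [Matrix.vecMulVec_apply, mul_assoc]
  rw [e1, e1]
  calc (Matrix.vecMulVec (_ • p₁) p₁ + Matrix.vecMulVec (_ • p₂) p₂).rank
      ≤ (Matrix.vecMulVec (_ • p₁) p₁).rank + (Matrix.vecMulVec (_ • p₂) p₂).rank :=
        matrix_rank_add_le _ _
    _ ≤ 1 + 1 := add_le_add (vecMulVec_rank_le_one _ _) (vecMulVec_rank_le_one _ _)
end

section
/- For every t ≥ 0 the gradient-descent iterates of the purely quadratic model satisfy the exact dynamics equations: g(t+1) = (1 − η·λ(t) + γ²·η²·s·g(t)²)·g(t), and λ(t+1) = λ(t) − η·γ²·s·g(t)²·(4 − η·λ(t)). -/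
open Matrix

/-- **Exact dynamics equations for the purely quadratic model**
`g(w) = (γ/2)·wᵀΣw` with `Σ² = s·I`, trained by gradient descent with step
size `η` on the squared loss of a single example with label `0`:
`g(t+1) = (1 − η·λ(t) + γ²·η²·s·g(t)²)·g(t)` and
`λ(t+1) = λ(t) − η·γ²·s·g(t)²·(4 − η·λ(t))`, where `λ(w) = γ²·s·‖w‖²` is the
tangent kernel. -/
theorem quadratic_model_zero_feature_dynamics
    (p : ℕ) (hp : 1 ≤ p)
    (S : Matrix (Fin p) (Fin p) ℝ) (hS : S.IsSymm)
    (s : ℝ) (hs : 0 < s)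
    (hSS : S * S = s • (1 : Matrix (Fin p) (Fin p) ℝ))
    (γ η : ℝ) (hγ : γ ≠ 0) (hη : 0 < η)
    (W : ℕ → Fin p → ℝ)
    (g lam : ℕ → ℝ)
    (hg : ∀ t, g t = (γ / 2) * (W t ⬝ᵥ S.mulVec (W t)))
    (hlam : ∀ t, lam t = γ ^ 2 * s * (W t ⬝ᵥ W t))
    (hW : ∀ t, W (t+1) = W t - (η * g t * γ) • S.mulVec (W t)) :
    ∀ t : ℕ,
      g (t+1) = (1 - η * lam t + γ ^ 2 * η ^ 2 * s * (g t) ^ 2) * g t ∧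
      lam (t+1) = lam t - η * γ ^ 2 * s * (g t) ^ 2 * (4 - η * lam t) := by
  intro t
  set u := W t with hu
  set A : ℝ := η * g t * γ with hA
  have hmm : S.mulVec (S.mulVec u) = s • u := by
    rw [Matrix.mulVec_mulVec, hSS, Matrix.smul_mulVec, Matrix.one_mulVec]
  have hsy : ∀ v w : Fin p → ℝ, S.mulVec v ⬝ᵥ w = v ⬝ᵥ S.mulVec w := by
    intro v w
    rw [dotProduct_comm, Matrix.dotProduct_mulVec, ← Matrix.mulVec_transpose, hS.eq,
      dotProduct_comm]
  have hSuSu : S.mulVec u ⬝ᵥ S.mulVec u = s * (u ⬝ᵥ u) := by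
    rw [hsy, hmm, dotProduct_smul, smul_eq_mul]
  have hSuu : S.mulVec u ⬝ᵥ u = u ⬝ᵥ S.mulVec u := dotProduct_comm _ _
  have hWn : W (t+1) = u - A • S.mulVec u := hW t
  have hd2 : γ * (u ⬝ᵥ S.mulVec u) = 2 * g t := by
    rw [hg t]; ring
  constructor
  · rw [hg (t+1), hWn, hlam t, Matrix.mulVec_sub, Matrix.mulVec_smul, hmm]
    simp only [sub_dotProduct, dotProduct_sub, smul_dotProduct, dotProduct_smul,
      smul_eq_mul, ← hu]
    rw [hSuSu, hSuu]
    linear_combination (1/2 + η^2*γ^2*s*(g t)^2/2) * hd2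
  · rw [hlam (t+1), hWn, hlam t]
    simp only [sub_dotProduct, dotProduct_sub, smul_dotProduct, dotProduct_smul,
      smul_eq_mul, ← hu]
    rw [hSuSu, hSuu]
    linear_combination (-2*η*γ^2*s*(g t)) * hd2
end

section
/- For every t ≥ 0 the gradient-descent iterates of the NQM on n unidimensional training examples satisfy the exact dynamics equations: g(t+1) − y = ( I − η·K(t) + (η²/m)·[⟨(g(t)−y)⊙m₊, g(t)⊙m₊⟩·p₁p₁ᵀ + ⟨(g(t)−y)⊙m₋, g(t)⊙m₋⟩·p₂p₂ᵀ] )·(g(t) − y), and K(t+1) = K(t) + (η²/m)·[ ((g(t)−y)⊙m₊)ᵀ·K(t)·((g(t)−y)⊙m₊)·p₁p₁ᵀ + ((g(t)−y)⊙m₋)ᵀ·K(t)·((g(t)−y)⊙m₋)·p₂p₂ᵀ ] − (4η/m)·[⟨(g(t)−y)⊙m₊, g(t)⊙m₊⟩·p₁p₁ᵀ + ⟨(g(t)−y)⊙m₋, g(t)⊙m₋⟩·p₂p₂ᵀ]. -/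
open Matrix

/-- **Exact dynamics equations for the NQM on `n` unidimensional training
examples** trained by gradient descent with step size `η` on the squared loss:
`g(t+1) − y = (I − η·K(t) + (η²/m)·[⟨(g−y)⊙m₊, g⊙m₊⟩·p₁p₁ᵀ +
⟨(g−y)⊙m₋, g⊙m₋⟩·p₂p₂ᵀ])·(g(t) − y)` and the corresponding update of the
tangent kernel `K`. -/
theorem nqm_multi_example_dynamics
    (n m : ℕ) (hn : 1 ≤ n) (hm : 1 ≤ m)
    (x y : Fin n → ℝ) (η : ℝ) (hη : 0 < η)
    (u0 v0 : Fin m → ℝ) (hu0 : ∀ k, u0 k ≠ 0)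
    -- the NQM outputs
    (g : (Fin m → ℝ) → (Fin m → ℝ) → Fin n → ℝ)
    (hg : ∀ u v i, g u v i =
      (1 / Real.sqrt m) * ∑ k, v0 k * max (u0 k * x i) 0
      + (1 / Real.sqrt m) * ∑ k, v0 k * (u k - u0 k) * x i *
          (if 0 ≤ u0 k * x i then 1 else 0)
      + (1 / Real.sqrt m) * ∑ k, (v k - v0 k) * max (u0 k * x i) 0
      + (1 / Real.sqrt m) * ∑ k, (v k - v0 k) * (u k - u0 k) * x i *
          (if 0 ≤ u0 k * x i then 1 else 0))
    -- the gradients of `g i` with respect to the parameters `u` and `v`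
    (gu gv : (Fin m → ℝ) → (Fin m → ℝ) → Fin n → Fin m → ℝ)
    (hgu : ∀ u v i k, gu u v i k =
      (1 / Real.sqrt m) * v k * x i * (if 0 ≤ u0 k * x i then 1 else 0))
    (hgv : ∀ u v i k, gv u v i k =
      (1 / Real.sqrt m) *
        (max (u0 k * x i) 0 + (u k - u0 k) * x i * (if 0 ≤ u0 k * x i then 1 else 0)))
    -- gradient descent on `½ Σᵢ (gᵢ − yᵢ)²`
    (U V : ℕ → Fin m → ℝ) (hU0 : U 0 = u0) (hV0 : V 0 = v0)
    (hU : ∀ t k, U (t+1) k =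
      U t k - η * ∑ i, (g (U t) (V t) i - y i) * gu (U t) (V t) i k)
    (hV : ∀ t k, V (t+1) k =
      V t k - η * ∑ i, (g (U t) (V t) i - y i) * gv (U t) (V t) i k)
    -- the output vector and the tangent kernel along the trajectory
    (G : ℕ → Fin n → ℝ) (hG : ∀ t, G t = g (U t) (V t))
    (K : ℕ → Matrix (Fin n) (Fin n) ℝ)
    (hK : ∀ t i j, K t i j =
      (∑ k, gu (U t) (V t) i k * gu (U t) (V t) j k)
      + ∑ k, gv (U t) (V t) i k * gv (U t) (V t) j k)
    -- mask vectors and kernel eigenvectors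
    (mp mm p₁ p₂ : Fin n → ℝ)
    (hmp : ∀ i, mp i = if 0 ≤ x i then 1 else 0)
    (hmm : ∀ i, mm i = if x i < 0 then 1 else 0)
    (hp₁ : ∀ i, p₁ i = x i * mp i)
    (hp₂ : ∀ i, p₂ i = x i * mm i) :
    ∀ t : ℕ,
      (G (t+1) - y =
        ((1 : Matrix (Fin n) (Fin n) ℝ) - η • K t + (η ^ 2 / m) •
            ((((fun i => (G t i - y i) * mp i) ⬝ᵥ fun i => G t i * mp i) •
                Matrix.vecMulVec p₁ p₁)
             + (((fun i => (G t i - y i) * mm i) ⬝ᵥ fun i => G t i * mm i) •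
                Matrix.vecMulVec p₂ p₂))).mulVec (G t - y))
      ∧ K (t+1) = K t
          + (η ^ 2 / m) •
            ((((fun i => (G t i - y i) * mp i) ⬝ᵥ
                (K t).mulVec fun i => (G t i - y i) * mp i) •
                Matrix.vecMulVec p₁ p₁)
             + (((fun i => (G t i - y i) * mm i) ⬝ᵥ
                (K t).mulVec fun i => (G t i - y i) * mm i) •
                Matrix.vecMulVec p₂ p₂))
          - (4 * η / m) •
            ((((fun i => (G t i - y i) * mp i) ⬝ᵥ fun i => G t i * mp i) •
                Matrix.vecMulVec p₁ p₁)
             + (((fun i => (G t i - y i) * mm i) ⬝ᵥ fun i => G t i * mm i) •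
                Matrix.vecMulVec p₂ p₂)) := by
  -- √m is positive
  have hm0 : (0:ℝ) < (m:ℝ) := by exact_mod_cast hm
  have hss : (1/Real.sqrt (m:ℝ)) * (1/Real.sqrt (m:ℝ)) = 1/(m:ℝ) := by
    rw [one_div_mul_one_div, Real.mul_self_sqrt hm0.le]
  have hmdiv : ∀ c : ℝ, c / (m:ℝ) = c * (1/Real.sqrt (m:ℝ) * (1/Real.sqrt (m:ℝ))) := by
    intro c; rw [hss, mul_one_div]
  -- indicators of the sign of u0 k
  obtain ⟨a, ha⟩ : ∃ a : Fin m → ℝ, ∀ k, a k = if 0 < u0 k then 1 else 0 :=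
    ⟨_, fun _ => rfl⟩
  obtain ⟨b, hb⟩ : ∃ b : Fin m → ℝ, ∀ k, b k = if u0 k < 0 then 1 else 0 :=
    ⟨_, fun _ => rfl⟩
  have hab' : ∀ k, (a k = 1 ∧ b k = 0) ∨ (a k = 0 ∧ b k = 1) := by
    intro k
    rcases (hu0 k).lt_or_gt with h | h
    · exact Or.inr ⟨by rw [ha]; exact if_neg (by linarith), by rw [hb]; exact if_pos h⟩
    · exact Or.inl ⟨by rw [ha]; exact if_pos h, by rw [hb]; exact if_neg (by linarith)⟩
  -- key identity for the kernel feature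
  have hxs : ∀ k i, x i * (if 0 ≤ u0 k * x i then (1:ℝ) else 0)
      = p₁ i * a k + p₂ i * b k := by
    intro k i
    rw [hp₁, hp₂, hmp, hmm, ha, hb]
    rcases (hu0 k).lt_or_gt with hk | hk <;> rcases lt_trichotomy (x i) 0 with hx | hx | hx
    · rw [if_pos (mul_pos_of_neg_of_neg hk hx).le, if_neg (not_le.2 hx), if_pos hx,
        if_neg (not_lt.2 hk.le), if_pos hk]; ring
    · rw [hx]; ring
    · rw [if_neg (not_le.2 (mul_neg_of_neg_of_pos hk hx)), if_pos hx.le,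
        if_neg (not_lt.2 hx.le), if_neg (not_lt.2 hk.le), if_pos hk]; ring
    · rw [if_neg (not_le.2 (mul_neg_of_pos_of_neg hk hx)), if_neg (not_le.2 hx),
        if_pos hx, if_pos hk, if_neg (not_lt.2 hk.le)]; ring
    · rw [hx]; ring
    · rw [if_pos (mul_pos hk hx).le, if_pos hx.le, if_neg (not_lt.2 hx.le),
        if_pos hk, if_neg (not_lt.2 hk.le)]; ring
  have hmax : ∀ c : ℝ, max c 0 = c * (if 0 ≤ c then 1 else 0) := by
    intro c
    rcases le_or_gt 0 c with h | h
    · rw [if_pos h, max_eq_left h, mul_one]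
    · rw [if_neg (not_le.2 h), max_eq_right h.le, mul_zero]
  -- simplified gradients
  have hgu' : ∀ t i k, gu (U t) (V t) i k
      = 1/Real.sqrt (m:ℝ) * V t k * (p₁ i * a k + p₂ i * b k) := by
    intro t i k
    rw [hgu]
    linear_combination (1/Real.sqrt (m:ℝ) * V t k) * hxs k i
  have hgv' : ∀ t i k, gv (U t) (V t) i k
      = 1/Real.sqrt (m:ℝ) * U t k * (p₁ i * a k + p₂ i * b k) := by
    intro t i k
    rw [hgv, hmax (u0 k * x i)]
    linear_combination (1/Real.sqrt (m:ℝ) * U t k) * hxs k i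
  -- summary quantities along the trajectory
  obtain ⟨A, hA⟩ : ∃ A : ℕ → ℝ, ∀ t,
      A t = 1/Real.sqrt (m:ℝ) * ∑ k, U t k * V t k * a k := ⟨_, fun _ => rfl⟩
  obtain ⟨B, hB⟩ : ∃ B : ℕ → ℝ, ∀ t,
      B t = 1/Real.sqrt (m:ℝ) * ∑ k, U t k * V t k * b k := ⟨_, fun _ => rfl⟩
  obtain ⟨Al, hAl⟩ : ∃ Al : ℕ → ℝ, ∀ t,
      Al t = 1/Real.sqrt (m:ℝ) * (1/Real.sqrt (m:ℝ)) *
        ∑ k, (U t k ^ 2 + V t k ^ 2) * a k := ⟨_, fun _ => rfl⟩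
  obtain ⟨Be, hBe⟩ : ∃ Be : ℕ → ℝ, ∀ t,
      Be t = 1/Real.sqrt (m:ℝ) * (1/Real.sqrt (m:ℝ)) *
        ∑ k, (U t k ^ 2 + V t k ^ 2) * b k := ⟨_, fun _ => rfl⟩
  obtain ⟨R₁, hR₁⟩ : ∃ R : ℕ → ℝ, ∀ t,
      R t = ∑ i, (G t i - y i) * p₁ i := ⟨_, fun _ => rfl⟩
  obtain ⟨R₂, hR₂⟩ : ∃ R : ℕ → ℝ, ∀ t,
      R t = ∑ i, (G t i - y i) * p₂ i := ⟨_, fun _ => rfl⟩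
  -- the outputs in terms of A, B
  have hGi : ∀ t i, G t i = A t * p₁ i + B t * p₂ i := by
    intro t i
    rw [hG t]
    rw [hg, hA t, hB t]
    simp only [hmax]
    simp only [Finset.mul_sum, Finset.sum_mul, mul_add, add_mul]
    simp only [← Finset.sum_add_distrib]
    refine Finset.sum_congr rfl fun k _ => ?_
    linear_combination (1/Real.sqrt (m:ℝ) * U t k * V t k) * hxs k i
  -- the kernel in terms of Al, Be
  have hKf : ∀ t i j, K t i j = Al t * (p₁ i * p₁ j) + Be t * (p₂ i * p₂ j) := by
    intro t i j
    rw [hK, hAl t, hBe t]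
    simp only [hgu', hgv']
    simp only [Finset.mul_sum, Finset.sum_mul, mul_add, add_mul]
    simp only [← Finset.sum_add_distrib]
    refine Finset.sum_congr rfl fun k _ => ?_
    rcases hab' k with ⟨h1, h2⟩ | ⟨h1, h2⟩ <;> rw [h1, h2] <;> ring
  -- parameter updates
  have hUstep : ∀ t k, U (t+1) k
      = U t k - η * (1/Real.sqrt (m:ℝ) * V t k * (a k * R₁ t + b k * R₂ t)) := by
    intro t k
    rw [hU t k, sub_right_inj, mul_right_inj' (ne_of_gt hη), hR₁ t, hR₂ t]
    simp only [hgu', ← hG]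
    simp only [Finset.mul_sum, Finset.sum_mul, mul_add, add_mul]
    simp only [← Finset.sum_add_distrib]
    exact Finset.sum_congr rfl fun i _ => by ring
  have hVstep : ∀ t k, V (t+1) k
      = V t k - η * (1/Real.sqrt (m:ℝ) * U t k * (a k * R₁ t + b k * R₂ t)) := by
    intro t k
    rw [hV t k, sub_right_inj, mul_right_inj' (ne_of_gt hη), hR₁ t, hR₂ t]
    simp only [hgv', ← hG]
    simp only [Finset.mul_sum, Finset.sum_mul, mul_add, add_mul]
    simp only [← Finset.sum_add_distrib]
    exact Finset.sum_congr rfl fun i _ => by ring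
  -- evolution of the summary quantities
  have hAstep : ∀ t, A (t+1) = A t - η * R₁ t * Al t
      + η ^ 2 * (1/Real.sqrt (m:ℝ) * (1/Real.sqrt (m:ℝ))) * R₁ t ^ 2 * A t := by
    intro t
    rw [hA (t+1), hA t, hAl t]
    simp only [hUstep, hVstep]
    simp only [Finset.mul_sum, Finset.sum_mul, mul_add, add_mul]
    rw [← Finset.sum_sub_distrib, ← Finset.sum_add_distrib]
    refine Finset.sum_congr rfl fun k _ => ?_
    rcases hab' k with ⟨h1, h2⟩ | ⟨h1, h2⟩ <;> rw [h1, h2] <;> ring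
  have hBstep : ∀ t, B (t+1) = B t - η * R₂ t * Be t
      + η ^ 2 * (1/Real.sqrt (m:ℝ) * (1/Real.sqrt (m:ℝ))) * R₂ t ^ 2 * B t := by
    intro t
    rw [hB (t+1), hB t, hBe t]
    simp only [hUstep, hVstep]
    simp only [Finset.mul_sum, Finset.sum_mul, mul_add, add_mul]
    rw [← Finset.sum_sub_distrib, ← Finset.sum_add_distrib]
    refine Finset.sum_congr rfl fun k _ => ?_
    rcases hab' k with ⟨h1, h2⟩ | ⟨h1, h2⟩ <;> rw [h1, h2] <;> ring
  have hAlstep : ∀ t, Al (t+1) = Al t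
      + η ^ 2 * (1/Real.sqrt (m:ℝ) * (1/Real.sqrt (m:ℝ))) * R₁ t ^ 2 * Al t
      - 4 * η * (1/Real.sqrt (m:ℝ) * (1/Real.sqrt (m:ℝ))) * R₁ t * A t := by
    intro t
    rw [hAl (t+1), hAl t, hA t]
    simp only [hUstep, hVstep]
    simp only [Finset.mul_sum, Finset.sum_mul, mul_add, add_mul]
    rw [← Finset.sum_add_distrib, ← Finset.sum_sub_distrib]
    refine Finset.sum_congr rfl fun k _ => ?_
    rcases hab' k with ⟨h1, h2⟩ | ⟨h1, h2⟩ <;> rw [h1, h2] <;> ring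
  have hBestep : ∀ t, Be (t+1) = Be t
      + η ^ 2 * (1/Real.sqrt (m:ℝ) * (1/Real.sqrt (m:ℝ))) * R₂ t ^ 2 * Be t
      - 4 * η * (1/Real.sqrt (m:ℝ) * (1/Real.sqrt (m:ℝ))) * R₂ t * B t := by
    intro t
    rw [hBe (t+1), hBe t, hB t]
    simp only [hUstep, hVstep]
    simp only [Finset.mul_sum, Finset.sum_mul, mul_add, add_mul]
    rw [← Finset.sum_add_distrib, ← Finset.sum_sub_distrib]
    refine Finset.sum_congr rfl fun k _ => ?_
    rcases hab' k with ⟨h1, h2⟩ | ⟨h1, h2⟩ <;> rw [h1, h2] <;> ring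
  -- the masked dot products
  have hd1 : ∀ t, ((fun i => (G t i - y i) * mp i) ⬝ᵥ fun i => G t i * mp i)
      = A t * R₁ t := by
    intro t
    simp only [dotProduct]
    rw [hR₁ t, Finset.mul_sum]
    refine Finset.sum_congr rfl fun i _ => ?_
    rw [hGi t i, hp₁ i, hp₂ i, hmp i, hmm i]
    rcases le_or_gt 0 (x i) with h | h
    · rw [if_pos h, if_neg (not_lt.2 h)]; ring
    · rw [if_neg (not_le.2 h), if_pos h]; ring
  have hd2 : ∀ t, ((fun i => (G t i - y i) * mm i) ⬝ᵥ fun i => G t i * mm i)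
      = B t * R₂ t := by
    intro t
    simp only [dotProduct]
    rw [hR₂ t, Finset.mul_sum]
    refine Finset.sum_congr rfl fun i _ => ?_
    rw [hGi t i, hp₁ i, hp₂ i, hmp i, hmm i]
    rcases le_or_gt 0 (x i) with h | h
    · rw [if_pos h, if_neg (not_lt.2 h)]; ring
    · rw [if_neg (not_le.2 h), if_pos h]; ring
  have hdK1 : ∀ t, ((fun i => (G t i - y i) * mp i) ⬝ᵥ
      (K t).mulVec fun i => (G t i - y i) * mp i) = Al t * R₁ t ^ 2 := by
    intro t
    have h1 : (K t).mulVec (fun i => (G t i - y i) * mp i)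
        = fun i => Al t * R₁ t * p₁ i := by
      funext i
      simp only [Matrix.mulVec, dotProduct, hKf]
      rw [hR₁ t]
      simp only [Finset.mul_sum, Finset.sum_mul, mul_add, add_mul]
      refine Finset.sum_congr rfl fun j _ => ?_
      rw [hp₁ j, hp₂ j, hmp j, hmm j]
      rcases le_or_gt 0 (x j) with h | h
      · rw [if_pos h, if_neg (not_lt.2 h)]; ring
      · rw [if_neg (not_le.2 h), if_pos h]; ring
    rw [h1]
    simp only [dotProduct]
    calc ∑ i, ((G t i - y i) * mp i) * (Al t * R₁ t * p₁ i)
        = Al t * R₁ t * ∑ i, (G t i - y i) * p₁ i := by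
          rw [Finset.mul_sum]
          refine Finset.sum_congr rfl fun i _ => ?_
          rw [hp₁ i, hmp i]
          rcases le_or_gt 0 (x i) with h | h
          · rw [if_pos h]; ring
          · rw [if_neg (not_le.2 h)]; ring
      _ = Al t * R₁ t ^ 2 := by rw [← hR₁ t]; ring
  have hdK2 : ∀ t, ((fun i => (G t i - y i) * mm i) ⬝ᵥ
      (K t).mulVec fun i => (G t i - y i) * mm i) = Be t * R₂ t ^ 2 := by
    intro t
    have h1 : (K t).mulVec (fun i => (G t i - y i) * mm i)
        = fun i => Be t * R₂ t * p₂ i := by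
      funext i
      simp only [Matrix.mulVec, dotProduct, hKf]
      rw [hR₂ t]
      simp only [Finset.mul_sum, Finset.sum_mul, mul_add, add_mul]
      refine Finset.sum_congr rfl fun j _ => ?_
      rw [hp₁ j, hp₂ j, hmp j, hmm j]
      rcases le_or_gt 0 (x j) with h | h
      · rw [if_pos h, if_neg (not_lt.2 h)]; ring
      · rw [if_neg (not_le.2 h), if_pos h]; ring
    rw [h1]
    simp only [dotProduct]
    calc ∑ i, ((G t i - y i) * mm i) * (Be t * R₂ t * p₂ i)
        = Be t * R₂ t * ∑ i, (G t i - y i) * p₂ i := by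
          rw [Finset.mul_sum]
          refine Finset.sum_congr rfl fun i _ => ?_
          rw [hp₂ i, hmm i]
          rcases le_or_gt 0 (x i) with h | h
          · rw [if_neg (not_lt.2 h)]; ring
          · rw [if_pos h]; ring
      _ = Be t * R₂ t ^ 2 := by rw [← hR₂ t]; ring
  -- vector level computations
  have hvmv : ∀ (w v u : Fin n → ℝ),
      (Matrix.vecMulVec w v).mulVec u = fun j => (v ⬝ᵥ u) * w j := by
    intro w v u
    funext j
    simp only [Matrix.mulVec, Matrix.vecMulVec_apply, dotProduct, Finset.sum_mul]
    exact Finset.sum_congr rfl fun k _ => by ring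
  have hp1r : ∀ t, p₁ ⬝ᵥ (G t - y) = R₁ t := by
    intro t
    simp only [dotProduct, Pi.sub_apply]
    rw [hR₁ t]
    exact Finset.sum_congr rfl fun i _ => by ring
  have hp2r : ∀ t, p₂ ⬝ᵥ (G t - y) = R₂ t := by
    intro t
    simp only [dotProduct, Pi.sub_apply]
    rw [hR₂ t]
    exact Finset.sum_congr rfl fun i _ => by ring
  have hKmv : ∀ t, (K t).mulVec (G t - y)
      = fun i => Al t * R₁ t * p₁ i + Be t * R₂ t * p₂ i := by
    intro t
    funext i
    simp only [Matrix.mulVec, dotProduct, Pi.sub_apply, hKf]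
    rw [hR₁ t, hR₂ t]
    simp only [Finset.mul_sum, Finset.sum_mul, mul_add, add_mul]
    rw [← Finset.sum_add_distrib]
    exact Finset.sum_congr rfl fun j _ => by ring
  -- main statement
  intro t
  constructor
  · rw [hd1 t, hd2 t]
    simp only [Matrix.add_mulVec, Matrix.sub_mulVec, Matrix.one_mulVec,
      Matrix.smul_mulVec, hvmv, hKmv t, hp1r t, hp2r t]
    funext i
    simp only [Pi.add_apply, Pi.sub_apply, Pi.smul_apply, smul_eq_mul]
    rw [hmdiv (η ^ 2), hGi (t+1) i, hGi t i, hAstep t, hBstep t]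
    ring
  · rw [hdK1 t, hdK2 t, hd1 t, hd2 t]
    ext i j
    simp only [Matrix.add_apply, Matrix.sub_apply, Matrix.smul_apply,
      Matrix.vecMulVec_apply, smul_eq_mul]
    rw [hKf (t+1) i j, hKf t i j, hAlstep t, hBestep t, hmdiv (η ^ 2), hmdiv (4 * η)]
    ring
end

section
/- (Reduction of the multi-example dynamics to the single-example catapult system in each eigendirection.) For i = 1, 2 and for every t ≥ 0: uᵢ(t+1) = (1 − vᵢ(t) + uᵢ(t) + wᵢ(t))²·uᵢ(t) and vᵢ(t+1) = vᵢ(t) − uᵢ(t)·(4 − vᵢ(t)) − 4·wᵢ(t); that is, in each of the two eigendirections of the tangent kernel the multi-example gradient-descent dynamics coincide exactly with the single-example catapult dynamics equations. -/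
open Matrix

/-- **Reduction of the multi-example NQM dynamics to the single-example
catapult system in each eigendirection.**  Under the alignment assumptions, in
each of the two eigendirections `p₁, p₂` of the tangent kernel the
multi-example gradient-descent dynamics coincide exactly with the
single-example catapult dynamics equations:
`uᵢ(t+1) = (1 − vᵢ(t) + uᵢ(t) + wᵢ(t))²·uᵢ(t)` and
`vᵢ(t+1) = vᵢ(t) − uᵢ(t)·(4 − vᵢ(t)) − 4·wᵢ(t)` for `i = 1, 2`. -/
theorem nqm_multi_example_reduction_to_catapult
    (n : ℕ) (hn : 1 ≤ n) (m η : ℝ) (hm : 0 < m) (hη : 0 < η)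
    (y p₁ p₂ mp mm : Fin n → ℝ)
    (hp₁ : p₁ ⬝ᵥ p₁ = 1) (hp₂ : p₂ ⬝ᵥ p₂ = 1) (hp₁₂ : p₁ ⬝ᵥ p₂ = 0)
    (hmp01 : ∀ i, mp i = 0 ∨ mp i = 1) (hmm01 : ∀ i, mm i = 0 ∨ mm i = 1)
    (hmp₁ : (fun i => p₁ i * mp i) = p₁) (hmp₂ : (fun i => p₂ i * mp i) = 0)
    (hmm₁ : (fun i => p₁ i * mm i) = 0) (hmm₂ : (fun i => p₂ i * mm i) = p₂)
    (g : ℕ → Fin n → ℝ) (K : ℕ → Matrix (Fin n) (Fin n) ℝ)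
    (hKsymm : ∀ t, (K t).IsSymm)
    -- the dynamics equations
    (hgstep : ∀ t : ℕ, g (t+1) - y =
      ((1 : Matrix (Fin n) (Fin n) ℝ) - η • K t + (η ^ 2 / m) •
          ((((fun i => (g t i - y i) * mp i) ⬝ᵥ fun i => g t i * mp i) •
              Matrix.vecMulVec p₁ p₁)
           + (((fun i => (g t i - y i) * mm i) ⬝ᵥ fun i => g t i * mm i) •
              Matrix.vecMulVec p₂ p₂))).mulVec (g t - y))
    (hKstep : ∀ t : ℕ, K (t+1) = K t
      + (η ^ 2 / m) •
          ((((fun i => (g t i - y i) * mp i) ⬝ᵥ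
              (K t).mulVec fun i => (g t i - y i) * mp i) •
              Matrix.vecMulVec p₁ p₁)
           + (((fun i => (g t i - y i) * mm i) ⬝ᵥ
              (K t).mulVec fun i => (g t i - y i) * mm i) •
              Matrix.vecMulVec p₂ p₂))
      - (4 * η / m) •
          ((((fun i => (g t i - y i) * mp i) ⬝ᵥ fun i => g t i * mp i) •
              Matrix.vecMulVec p₁ p₁)
           + (((fun i => (g t i - y i) * mm i) ⬝ᵥ fun i => g t i * mm i) •
              Matrix.vecMulVec p₂ p₂)))
    -- the tangent kernel is initially diagonal in the directions `p₁, p₂` …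
    (lamA lamB : ℝ)
    (hK0 : K 0 = lamA • Matrix.vecMulVec p₁ p₁ + lamB • Matrix.vecMulVec p₂ p₂)
    -- … and the initial residual is aligned with them
    (halignP : (fun i => (g 0 i - y i) * mp i) = ((g 0 - y) ⬝ᵥ p₁) • p₁)
    (halignM : (fun i => (g 0 i - y i) * mm i) = ((g 0 - y) ⬝ᵥ p₂) • p₂)
    -- the projected quantities
    (u₁ u₂ w₁ w₂ v₁ v₂ : ℕ → ℝ)
    (hu₁ : ∀ t, u₁ t = (η ^ 2 / m) * ((g t - y) ⬝ᵥ p₁) ^ 2)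
    (hu₂ : ∀ t, u₂ t = (η ^ 2 / m) * ((g t - y) ⬝ᵥ p₂) ^ 2)
    (hw₁ : ∀ t, w₁ t = (η ^ 2 / m) * ((g t - y) ⬝ᵥ p₁) * (y ⬝ᵥ p₁))
    (hw₂ : ∀ t, w₂ t = (η ^ 2 / m) * ((g t - y) ⬝ᵥ p₂) * (y ⬝ᵥ p₂))
    (hv₁ : ∀ t, v₁ t = η * (p₁ ⬝ᵥ (K t).mulVec p₁))
    (hv₂ : ∀ t, v₂ t = η * (p₂ ⬝ᵥ (K t).mulVec p₂)) :
    ∀ t : ℕ,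
      (u₁ (t+1) = (1 - v₁ t + u₁ t + w₁ t) ^ 2 * u₁ t ∧
       v₁ (t+1) = v₁ t - u₁ t * (4 - v₁ t) - 4 * w₁ t) ∧
      (u₂ (t+1) = (1 - v₂ t + u₂ t + w₂ t) ^ 2 * u₂ t ∧
       v₂ (t+1) = v₂ t - u₂ t * (4 - v₂ t) - 4 * w₂ t) := by

  have hp₂₁ : p₂ ⬝ᵥ p₁ = 0 := by rw [dotProduct_comm]; exact hp₁₂
  have vmv : ∀ (a c x : Fin n → ℝ),
      (Matrix.vecMulVec a c).mulVec x = (c ⬝ᵥ x) • a := by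
    intro a c x
    funext i
    simp [Matrix.mulVec, Matrix.vecMulVec, dotProduct, Finset.mul_sum, mul_assoc,
      mul_comm, mul_left_comm]
  -- the invariant: alignment and diagonal structure of the kernel
  have key : ∀ t, ((fun i => (g t i - y i) * mp i) = ((g t - y) ⬝ᵥ p₁) • p₁) ∧
      ((fun i => (g t i - y i) * mm i) = ((g t - y) ⬝ᵥ p₂) • p₂) ∧
      ∃ a b : ℝ, K t = a • Matrix.vecMulVec p₁ p₁ + b • Matrix.vecMulVec p₂ p₂ := by
    intro t
    induction t with
    | zero => exact ⟨halignP, halignM, lamA, lamB, hK0⟩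
    | succ t ih =>
      obtain ⟨hA, hB, a, b, hK⟩ := ih
      have hq₁ : ((fun i => (g t i - y i) * mp i) ⬝ᵥ fun i => g t i * mp i)
          = ((g t - y) ⬝ᵥ p₁) * (p₁ ⬝ᵥ g t) := by
        rw [hA, smul_dotProduct]
        congr 1
        have h1 : p₁ ⬝ᵥ (fun i => g t i * mp i) = (fun i => p₁ i * mp i) ⬝ᵥ g t := by
          simp only [dotProduct]
          exact Finset.sum_congr rfl fun i _ => by ring
        rw [h1, hmp₁]
      have hq₂ : ((fun i => (g t i - y i) * mm i) ⬝ᵥ fun i => g t i * mm i)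
          = ((g t - y) ⬝ᵥ p₂) * (p₂ ⬝ᵥ g t) := by
        rw [hB, smul_dotProduct]
        congr 1
        have h1 : p₂ ⬝ᵥ (fun i => g t i * mm i) = (fun i => p₂ i * mm i) ⬝ᵥ g t := by
          simp only [dotProduct]
          exact Finset.sum_congr rfl fun i _ => by ring
        rw [h1, hmm₂]
      have hKmv : (K t).mulVec (g t - y)
          = (a * ((g t - y) ⬝ᵥ p₁)) • p₁ + (b * ((g t - y) ⬝ᵥ p₂)) • p₂ := by
        rw [hK, Matrix.add_mulVec, Matrix.smul_mulVec, Matrix.smul_mulVec,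
          vmv, vmv, dotProduct_comm p₁ (g t - y), dotProduct_comm p₂ (g t - y),
          smul_smul, smul_smul]
      have hres : g (t+1) - y = (g t - y)
          + ((η ^ 2 / m) * (((g t - y) ⬝ᵥ p₁) * (p₁ ⬝ᵥ g t)) * ((g t - y) ⬝ᵥ p₁)
              - η * (a * ((g t - y) ⬝ᵥ p₁))) • p₁
          + ((η ^ 2 / m) * (((g t - y) ⬝ᵥ p₂) * (p₂ ⬝ᵥ g t)) * ((g t - y) ⬝ᵥ p₂)
              - η * (b * ((g t - y) ⬝ᵥ p₂))) • p₂ := by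
        rw [hgstep t, Matrix.add_mulVec, Matrix.sub_mulVec, Matrix.one_mulVec,
          Matrix.smul_mulVec, Matrix.smul_mulVec, Matrix.add_mulVec,
          Matrix.smul_mulVec, Matrix.smul_mulVec, vmv, vmv,
          dotProduct_comm p₁ (g t - y), dotProduct_comm p₂ (g t - y), hq₁, hq₂, hKmv]
        module
      have hc₁' : (g (t+1) - y) ⬝ᵥ p₁ = ((g t - y) ⬝ᵥ p₁)
          + ((η ^ 2 / m) * (((g t - y) ⬝ᵥ p₁) * (p₁ ⬝ᵥ g t)) * ((g t - y) ⬝ᵥ p₁)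
              - η * (a * ((g t - y) ⬝ᵥ p₁))) := by
        rw [hres]
        simp [add_dotProduct, smul_dotProduct, hp₁, hp₂₁]
      have hc₂' : (g (t+1) - y) ⬝ᵥ p₂ = ((g t - y) ⬝ᵥ p₂)
          + ((η ^ 2 / m) * (((g t - y) ⬝ᵥ p₂) * (p₂ ⬝ᵥ g t)) * ((g t - y) ⬝ᵥ p₂)
              - η * (b * ((g t - y) ⬝ᵥ p₂))) := by
        rw [hres]
        simp [add_dotProduct, smul_dotProduct, hp₂, hp₁₂]
      refine ⟨?_, ?_, ?_⟩
      · funext i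
        have e1 := congrFun hres i
        simp only [Pi.add_apply, Pi.sub_apply, Pi.smul_apply, smul_eq_mul] at e1
        have e2 := congrFun hA i
        simp only [Pi.smul_apply, smul_eq_mul] at e2
        have e3 := congrFun hmp₁ i
        have e4 := congrFun hmp₂ i
        simp only [Pi.zero_apply] at e4
        show (g (t+1) i - y i) * mp i = _
        simp only [Pi.smul_apply, smul_eq_mul, hc₁']
        linear_combination mp i * e1 + e2
          + ((η ^ 2 / m) * (((g t - y) ⬝ᵥ p₁) * (p₁ ⬝ᵥ g t)) * ((g t - y) ⬝ᵥ p₁)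
              - η * (a * ((g t - y) ⬝ᵥ p₁))) * e3
          + ((η ^ 2 / m) * (((g t - y) ⬝ᵥ p₂) * (p₂ ⬝ᵥ g t)) * ((g t - y) ⬝ᵥ p₂)
              - η * (b * ((g t - y) ⬝ᵥ p₂))) * e4
      · funext i
        have e1 := congrFun hres i
        simp only [Pi.add_apply, Pi.sub_apply, Pi.smul_apply, smul_eq_mul] at e1
        have e2 := congrFun hB i
        simp only [Pi.smul_apply, smul_eq_mul] at e2
        have e3 := congrFun hmm₂ i
        have e4 := congrFun hmm₁ i
        simp only [Pi.zero_apply] at e4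
        show (g (t+1) i - y i) * mm i = _
        simp only [Pi.smul_apply, smul_eq_mul, hc₂']
        linear_combination mm i * e1 + e2
          + ((η ^ 2 / m) * (((g t - y) ⬝ᵥ p₂) * (p₂ ⬝ᵥ g t)) * ((g t - y) ⬝ᵥ p₂)
              - η * (b * ((g t - y) ⬝ᵥ p₂))) * e3
          + ((η ^ 2 / m) * (((g t - y) ⬝ᵥ p₁) * (p₁ ⬝ᵥ g t)) * ((g t - y) ⬝ᵥ p₁)
              - η * (a * ((g t - y) ⬝ᵥ p₁))) * e4
      · refine ⟨a + (η ^ 2 / m) * ((fun i => (g t i - y i) * mp i) ⬝ᵥ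
              (K t).mulVec fun i => (g t i - y i) * mp i)
            - (4 * η / m) * ((fun i => (g t i - y i) * mp i) ⬝ᵥ fun i => g t i * mp i),
          b + (η ^ 2 / m) * ((fun i => (g t i - y i) * mm i) ⬝ᵥ
              (K t).mulVec fun i => (g t i - y i) * mm i)
            - (4 * η / m) * ((fun i => (g t i - y i) * mm i) ⬝ᵥ fun i => g t i * mm i), ?_⟩
        rw [hKstep t, hK]
        module
  intro t
  obtain ⟨hA, hB, a, b, hK⟩ := key t
  have hg₁ : p₁ ⬝ᵥ g t = ((g t - y) ⬝ᵥ p₁) + y ⬝ᵥ p₁ := by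
    rw [dotProduct_comm p₁ (g t), sub_dotProduct]
    ring
  have hg₂ : p₂ ⬝ᵥ g t = ((g t - y) ⬝ᵥ p₂) + y ⬝ᵥ p₂ := by
    rw [dotProduct_comm p₂ (g t), sub_dotProduct]
    ring
  have hq₁ : ((fun i => (g t i - y i) * mp i) ⬝ᵥ fun i => g t i * mp i)
      = ((g t - y) ⬝ᵥ p₁) * (((g t - y) ⬝ᵥ p₁) + y ⬝ᵥ p₁) := by
    rw [hA, smul_dotProduct]
    congr 1
    have h1 : p₁ ⬝ᵥ (fun i => g t i * mp i) = (fun i => p₁ i * mp i) ⬝ᵥ g t := by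
      simp only [dotProduct]
      exact Finset.sum_congr rfl fun i _ => by ring
    rw [h1, hmp₁, ← hg₁]
  have hq₂ : ((fun i => (g t i - y i) * mm i) ⬝ᵥ fun i => g t i * mm i)
      = ((g t - y) ⬝ᵥ p₂) * (((g t - y) ⬝ᵥ p₂) + y ⬝ᵥ p₂) := by
    rw [hB, smul_dotProduct]
    congr 1
    have h1 : p₂ ⬝ᵥ (fun i => g t i * mm i) = (fun i => p₂ i * mm i) ⬝ᵥ g t := by
      simp only [dotProduct]
      exact Finset.sum_congr rfl fun i _ => by ring
    rw [h1, hmm₂, ← hg₂]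
  have hlam1 : p₁ ⬝ᵥ (K t).mulVec p₁ = a := by
    rw [hK, Matrix.add_mulVec, Matrix.smul_mulVec, Matrix.smul_mulVec,
      vmv, vmv, hp₁, hp₂₁]
    simp [dotProduct_add, dotProduct_smul, hp₁, hp₂₁, dotProduct_comm p₁ p₂, hp₁₂]
  have hlam2 : p₂ ⬝ᵥ (K t).mulVec p₂ = b := by
    rw [hK, Matrix.add_mulVec, Matrix.smul_mulVec, Matrix.smul_mulVec,
      vmv, vmv, hp₂, hp₁₂]
    simp [dotProduct_add, dotProduct_smul, hp₂, hp₁₂, dotProduct_comm p₂ p₁, hp₂₁]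
  have hr₁ : ((fun i => (g t i - y i) * mp i) ⬝ᵥ
      (K t).mulVec fun i => (g t i - y i) * mp i) = ((g t - y) ⬝ᵥ p₁) ^ 2 * a := by
    rw [hA, Matrix.mulVec_smul, smul_dotProduct, dotProduct_smul, smul_eq_mul,
      smul_eq_mul, hlam1]
    ring
  have hr₂ : ((fun i => (g t i - y i) * mm i) ⬝ᵥ
      (K t).mulVec fun i => (g t i - y i) * mm i) = ((g t - y) ⬝ᵥ p₂) ^ 2 * b := by
    rw [hB, Matrix.mulVec_smul, smul_dotProduct, dotProduct_smul, smul_eq_mul,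
      smul_eq_mul, hlam2]
    ring
  have hKmv : (K t).mulVec (g t - y)
      = (a * ((g t - y) ⬝ᵥ p₁)) • p₁ + (b * ((g t - y) ⬝ᵥ p₂)) • p₂ := by
    rw [hK, Matrix.add_mulVec, Matrix.smul_mulVec, Matrix.smul_mulVec,
      vmv, vmv, dotProduct_comm p₁ (g t - y), dotProduct_comm p₂ (g t - y),
      smul_smul, smul_smul]
  have hres : g (t+1) - y = (g t - y)
      + ((η ^ 2 / m) * (((g t - y) ⬝ᵥ p₁) * (((g t - y) ⬝ᵥ p₁) + y ⬝ᵥ p₁)) * ((g t - y) ⬝ᵥ p₁)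
          - η * (a * ((g t - y) ⬝ᵥ p₁))) • p₁
      + ((η ^ 2 / m) * (((g t - y) ⬝ᵥ p₂) * (((g t - y) ⬝ᵥ p₂) + y ⬝ᵥ p₂)) * ((g t - y) ⬝ᵥ p₂)
          - η * (b * ((g t - y) ⬝ᵥ p₂))) • p₂ := by
    rw [hgstep t, Matrix.add_mulVec, Matrix.sub_mulVec, Matrix.one_mulVec,
      Matrix.smul_mulVec, Matrix.smul_mulVec, Matrix.add_mulVec,
      Matrix.smul_mulVec, Matrix.smul_mulVec, vmv, vmv,
      dotProduct_comm p₁ (g t - y), dotProduct_comm p₂ (g t - y), hq₁, hq₂, hKmv]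
    module
  have hc₁' : (g (t+1) - y) ⬝ᵥ p₁ = ((g t - y) ⬝ᵥ p₁)
      + ((η ^ 2 / m) * (((g t - y) ⬝ᵥ p₁) * (((g t - y) ⬝ᵥ p₁) + y ⬝ᵥ p₁)) * ((g t - y) ⬝ᵥ p₁)
          - η * (a * ((g t - y) ⬝ᵥ p₁))) := by
    rw [hres]
    simp [add_dotProduct, smul_dotProduct, hp₁, hp₂₁]
  have hc₂' : (g (t+1) - y) ⬝ᵥ p₂ = ((g t - y) ⬝ᵥ p₂)
      + ((η ^ 2 / m) * (((g t - y) ⬝ᵥ p₂) * (((g t - y) ⬝ᵥ p₂) + y ⬝ᵥ p₂)) * ((g t - y) ⬝ᵥ p₂)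
          - η * (b * ((g t - y) ⬝ᵥ p₂))) := by
    rw [hres]
    simp [add_dotProduct, smul_dotProduct, hp₂, hp₁₂]
  have hKquad₁ : p₁ ⬝ᵥ (K (t+1)).mulVec p₁
      = a + (η ^ 2 / m) * (((g t - y) ⬝ᵥ p₁) ^ 2 * a)
        - (4 * η / m) * (((g t - y) ⬝ᵥ p₁) * (((g t - y) ⬝ᵥ p₁) + y ⬝ᵥ p₁)) := by
    rw [hKstep t, hq₁, hq₂, hr₁, hr₂]
    simp only [Matrix.add_mulVec, Matrix.sub_mulVec, Matrix.smul_mulVec, vmv,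
      hp₁, hp₂₁, dotProduct_add, dotProduct_sub, dotProduct_smul, smul_eq_mul,
      one_smul, zero_smul, dotProduct_zero, hlam1]
    ring
  have hKquad₂ : p₂ ⬝ᵥ (K (t+1)).mulVec p₂
      = b + (η ^ 2 / m) * (((g t - y) ⬝ᵥ p₂) ^ 2 * b)
        - (4 * η / m) * (((g t - y) ⬝ᵥ p₂) * (((g t - y) ⬝ᵥ p₂) + y ⬝ᵥ p₂)) := by
    rw [hKstep t, hq₁, hq₂, hr₁, hr₂]
    simp only [Matrix.add_mulVec, Matrix.sub_mulVec, Matrix.smul_mulVec, vmv,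
      hp₂, hp₁₂, dotProduct_add, dotProduct_sub, dotProduct_smul, smul_eq_mul,
      one_smul, zero_smul, dotProduct_zero, hlam2]
    ring
  refine ⟨⟨?_, ?_⟩, ?_, ?_⟩
  · simp only [hu₁, hv₁, hw₁, hlam1, hc₁']
    ring
  · simp only [hu₁, hv₁, hw₁, hlam1, hKquad₁]
    ring
  · simp only [hu₂, hv₂, hw₂, hlam2, hc₂']
    ring
  · simp only [hu₂, hv₂, hw₂, hlam2, hKquad₂]
    ring
end
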